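/- arXiv:2508.18394 — 4 statements merged into one kernel-verified Lean document; each statement's English description precedes it below -/
import Mathlib

section
/- There is an absolute constant c > 0 such that the following holds. Let x ≥ 1, let f : ℕ → ℂ be supported on the integers in [1, x], let α be real, let 1 ≤ y ≤ x and 1 ≤ Q ≤ x^(1/2). Define F(x; β) := Σ_{n ≤ x} f(n) e(βn), F(n, n+y; α) := Σ_{n < m ≤ n+y} f(m) e(αm), and let 𝒜(Q, y) be the set of rationals a/q with 1 ≤ q ≤ Q, gcd(a, q) = 1 and |α − a/q| ≤ 1/(6y). Then Σ_{−y < n ≤ x} |F(n, n+y; α)|² ≥ c · (y²/x) · Σ_{a/q ∈ 𝒜(Q, y)} |F(x; a/q)|², where the left-hand sum is over integers n. -/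
open Finset

noncomputable def e (β : ℝ) : ℂ := Complex.exp (2 * Real.pi * Complex.I * β)

/-!
Twisting the short sums `F(n, n + y; α)` by `e((a/q - α) n)` and summing over `n` factors the result
as `F(x; a/q)` times the kernel `∑_{1 ≤ j ≤ y} e(-(a/q - α) j)`, whose real part is at least half
its length because `|a/q - α| ≤ 1/(6y)`; so each `|F(x; a/q)|² y²` is `≪` the squared twisted sum.
Distinct reduced fractions with denominators at most `Q` are `Q⁻²`-separated, and the large sieve
bounds the sum of the squared twisted sums over `𝒜(Q, y)` by `≪ (N + Q⁴/N) ∑_n |F(n, n + y; α)|²`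
with `N ≍ x`, which is `≪ x ∑_n |F(n, n + y; α)|²` since `Q⁴ ≤ x²`.

The large sieve is proved by duality. Averaging the dual sum `∑_n |∑_p c_p e(θ_p n)|²` over
`N + 1` translates bounds it by `N⁻¹ ∑_{p,p'} |c_p c_p'| |∑_{u ≤ 2N} e((θ_p - θ_p') u)|²`. Off the
diagonal the squared geometric sum is `≪ (θ_p - θ_p')⁻²`, which sums over `δ`-separated points to
`≪ δ⁻²` with no logarithmic loss, and a Schur test concludes.
-/

open Real

lemma e_eq_exp (t : ℝ) : e t = Complex.exp ((2 * π * t : ℝ) * Complex.I) := by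
  unfold e; push_cast; ring_nf

@[simp] lemma e_zero : e 0 = 1 := by simp [e]

lemma e_add (s t : ℝ) : e (s + t) = e s * e t := by
  simp only [e, ← Complex.exp_add]; push_cast; ring_nf

@[simp] lemma norm_e (t : ℝ) : ‖e t‖ = 1 := by
  rw [e_eq_exp, Complex.norm_exp_ofReal_mul_I]

lemma re_e (t : ℝ) : (e t).re = cos (2 * π * t) := by
  rw [e_eq_exp, Complex.exp_ofReal_mul_I_re]

lemma conj_e (t : ℝ) : (starRingEnd ℂ) (e t) = e (-t) := by
  simp only [e, ← Complex.exp_conj, map_mul, Complex.conj_I, Complex.conj_ofReal, map_ofNat]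
  push_cast; ring_nf

lemma e_mul_natCast (t : ℝ) (n : ℕ) : e (t * n) = e t ^ n := by
  simp only [e, ← Complex.exp_nat_mul]; push_cast; ring_nf

lemma four_mul_abs_le_norm_e_sub_one {φ : ℝ} (h : |φ| ≤ 1 / 2) : 4 * |φ| ≤ ‖e φ - 1‖ := by
  have hsin : 2 / π * |π * φ| ≤ |sin (π * φ)| :=
    mul_abs_le_abs_sin (by rw [abs_mul, abs_of_pos pi_pos]; nlinarith [pi_pos])
  have hnorm : ‖e φ - 1‖ = 2 * |sin (π * φ)| := by
    rw [e_eq_exp, mul_comm, Complex.norm_exp_I_mul_ofReal_sub_one, Real.norm_eq_abs, abs_mul,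
      abs_two]
    ring_nf
  rw [hnorm, abs_mul, abs_of_pos pi_pos] at *
  field_simp at hsin
  linarith

lemma norm_geom_sum_le_of_norm_eq_one {z : ℂ} (hz : ‖z‖ = 1) (hz1 : z ≠ 1) (n : ℕ) :
    ‖∑ i ∈ range n, z ^ i‖ ≤ 2 / ‖z - 1‖ := by
  rw [geom_sum_eq hz1, norm_div]
  gcongr
  calc ‖z ^ n - 1‖ ≤ ‖z ^ n‖ + ‖(1 : ℂ)‖ := norm_sub_le _ _
    _ = 2 := by rw [norm_pow, hz]; norm_num

lemma norm_sum_Icc_e_mul_le {φ : ℝ} (hφ : φ ≠ 0) (h : |φ| ≤ 1 / 2) (A B : ℤ) :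
    ‖∑ u ∈ Icc A B, e (φ * u)‖ ≤ 1 / (2 * |φ|) := by
  have hpos : 0 < |φ| := abs_pos.2 hφ
  have hdist := four_mul_abs_le_norm_e_sub_one h
  have hgeom : ∑ u ∈ Icc A B, e (φ * u) = e (φ * A) * ∑ j ∈ range (B + 1 - A).toNat, e φ ^ j := by
    rw [Int.Icc_eq_finset_map, sum_map, mul_sum]
    refine sum_congr rfl fun j _ => ?_
    simp only [Function.Embedding.trans_apply, Nat.castEmbedding_apply, addLeftEmbedding_apply,
      ← e_mul_natCast, ← e_add]
    push_cast; ring_nf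
  rw [hgeom, norm_mul, norm_e, one_mul]
  refine (norm_geom_sum_le_of_norm_eq_one (norm_e φ) (fun h1 => ?_) _).trans ?_
  · rw [h1, sub_self, norm_zero] at hdist; linarith
  · rw [div_le_div_iff₀ (by linarith) (by positivity)]; linarith

lemma sum_one_div_sq_int_le (s : Finset ℤ) : ∑ j ∈ s, 1 / (j : ℝ) ^ 2 ≤ 4 := by
  have hpos : HasSum (fun n : ℕ => 1 / ((n : ℤ) : ℝ) ^ 2) (π ^ 2 / 6) := by
    simpa using hasSum_zeta_two
  have hneg : HasSum (fun n : ℕ => 1 / ((-(n + 1 : ℤ) : ℤ) : ℝ) ^ 2) (π ^ 2 / 6) := by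
    have h := (hasSum_nat_add_iff' 1).2 hasSum_zeta_two
    rw [show (fun n : ℕ => 1 / ((-(n + 1 : ℤ) : ℤ) : ℝ) ^ 2) = fun n => 1 / ((n + 1 : ℕ) : ℝ) ^ 2
      from funext fun n => by push_cast; ring]
    simpa using h
  calc ∑ j ∈ s, 1 / (j : ℝ) ^ 2 ≤ π ^ 2 / 6 + π ^ 2 / 6 :=
        sum_le_hasSum s (fun _ _ => by positivity) (hpos.of_nat_of_neg_add_one hneg)
    _ ≤ 4 := by nlinarith [pi_lt_d2, pi_pos]

lemma sum_sum_mul_mul_le_of_sum_le {ι : Type*} (P : Finset ι) (a : ι → ℝ) (k : ι → ι → ℝ)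
    (hk : ∀ p ∈ P, ∀ p' ∈ P, 0 ≤ k p p') (hsymm : ∀ p p', k p p' = k p' p) {R : ℝ}
    (hrow : ∀ p ∈ P, ∑ p' ∈ P, k p p' ≤ R) :
    ∑ p ∈ P, ∑ p' ∈ P, a p * a p' * k p p' ≤ R * ∑ p ∈ P, a p ^ 2 := by
  have hhalf : ∑ p ∈ P, ∑ p' ∈ P, a p ^ 2 / 2 * k p p' ≤ R / 2 * ∑ p ∈ P, a p ^ 2 := by
    rw [mul_sum]
    refine sum_le_sum fun p hp => ?_
    rw [← mul_sum]
    nlinarith [hrow p hp, sq_nonneg (a p)]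
  calc ∑ p ∈ P, ∑ p' ∈ P, a p * a p' * k p p'
      ≤ ∑ p ∈ P, ∑ p' ∈ P, (a p ^ 2 / 2 * k p p' + a p' ^ 2 / 2 * k p' p) :=
        sum_le_sum fun p hp => sum_le_sum fun p' hp' => by
          rw [hsymm p' p]; nlinarith [hk p hp p' hp', sq_nonneg (a p - a p')]
    _ ≤ R * ∑ p ∈ P, a p ^ 2 := by
        simp only [sum_add_distrib]
        rw [sum_comm (f := fun p p' => a p' ^ 2 / 2 * k p' p)]
        linarith

/-- Each of the `B - A + 1` translates of `(A, B]` by `v ∈ [0, B - A]` fits inside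
`K = [A + 1, 2B - A]`, which contains all those `v` since `A < 0 ≤ B`. -/
lemma mul_sum_Ioc_le_sum_sum_sub {g : ℤ → ℝ} (hg : ∀ n, 0 ≤ g n) {A B : ℤ} (hA : A < 0)
    (hB : 0 ≤ B) :
    ((B : ℝ) - A + 1) * ∑ n ∈ Ioc A B, g n ≤
      ∑ v ∈ Icc (A + 1) (2 * B - A), ∑ u ∈ Icc (A + 1) (2 * B - A), g (u - v) := by
  have hcard : (#(Icc 0 (B - A)) : ℝ) = (B : ℝ) - A + 1 := by
    rw [← Int.cast_natCast, Int.card_Icc_of_le 0 (B - A) (by omega)]; push_cast; ring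
  have hshift : ∀ v ∈ Icc 0 (B - A),
      ∑ n ∈ Ioc A B, g n ≤ ∑ u ∈ Icc (A + 1) (2 * B - A), g (u - v) := fun v hv => by
    rw [mem_Icc] at hv
    calc ∑ n ∈ Ioc A B, g n = ∑ u ∈ (Ioc A B).map (addRightEmbedding v), g (u - v) := by
          rw [sum_map]; simp only [addRightEmbedding_apply, add_sub_cancel_right]
      _ ≤ ∑ u ∈ Icc (A + 1) (2 * B - A), g (u - v) := by
        refine sum_le_sum_of_subset_of_nonneg ?_ fun _ _ _ => hg _
        intro u hu
        simp only [map_add_right_Ioc, mem_Ioc, mem_Icc] at hu ⊢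
        omega
  calc ((B : ℝ) - A + 1) * ∑ n ∈ Ioc A B, g n = ∑ _v ∈ Icc 0 (B - A), ∑ n ∈ Ioc A B, g n := by
        rw [sum_const, nsmul_eq_mul, hcard]
    _ ≤ ∑ v ∈ Icc 0 (B - A), ∑ u ∈ Icc (A + 1) (2 * B - A), g (u - v) := sum_le_sum hshift
    _ ≤ _ := by
        refine sum_le_sum_of_subset_of_nonneg ?_ fun _ _ _ => sum_nonneg fun _ _ => hg _
        intro v hv
        simp only [mem_Icc] at hv ⊢
        omega

lemma ofReal_sum_sum_norm_sq_sum_e_sub {ι : Type*} (P : Finset ι) (K : Finset ℤ) (c : ι → ℂ)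
    (θ : ι → ℝ) :
    ((∑ v ∈ K, ∑ u ∈ K, ‖∑ p ∈ P, c p * e (θ p * (u - v : ℤ))‖ ^ 2 : ℝ) : ℂ) =
      ∑ p ∈ P, ∑ p' ∈ P, c p * (starRingEnd ℂ) (c p') *
        (‖∑ u ∈ K, e ((θ p - θ p') * u)‖ ^ 2 : ℝ) := by
  push_cast
  simp only [← Complex.mul_conj', map_sum, map_mul, conj_e]
  simp only [sum_mul_sum]
  simp only [mul_sum]
  simp_rw [sum_comm (s := K) (t := P)]
  refine sum_congr rfl fun p _ => sum_congr rfl fun p' _ => ?_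
  rw [sum_comm]
  refine sum_congr rfl fun u _ => sum_congr rfl fun v _ => ?_
  rw [mul_mul_mul_comm, ← e_add, ← e_add]
  congr 2
  ring

lemma sum_norm_sq_le_of_dual {ι κ : Type*} (P : Finset ι) (I : Finset κ) (w : ι → κ → ℂ) {C : ℝ}
    (hC : 0 ≤ C)
    (hdual : ∀ c : ι → ℂ, ∑ n ∈ I, ‖∑ p ∈ P, c p * w p n‖ ^ 2 ≤ C * ∑ p ∈ P, ‖c p‖ ^ 2)
    (T : κ → ℂ) : ∑ p ∈ P, ‖∑ n ∈ I, T n * w p n‖ ^ 2 ≤ C * ∑ n ∈ I, ‖T n‖ ^ 2 := by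
  set S : ι → ℂ := fun p => ∑ n ∈ I, T n * w p n
  set U : κ → ℂ := fun n => ∑ p ∈ P, (starRingEnd ℂ) (S p) * w p n
  set X := ∑ p ∈ P, ‖S p‖ ^ 2
  have hXU : (X : ℂ) = ∑ n ∈ I, T n * U n := by
    simp only [X, U, S, Complex.ofReal_sum, Complex.ofReal_pow, ← Complex.conj_mul',
      mul_sum]
    rw [sum_comm]
    exact sum_congr rfl fun _ _ => sum_congr rfl fun _ _ => by ring
  have hCS : X ^ 2 ≤ (∑ n ∈ I, ‖T n‖ ^ 2) * ∑ n ∈ I, ‖U n‖ ^ 2 := by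
    have hX : X ≤ ∑ n ∈ I, ‖T n‖ * ‖U n‖ := by
      rw [← Complex.norm_of_nonneg (by positivity : 0 ≤ X), hXU]
      exact (norm_sum_le _ _).trans_eq (by simp only [norm_mul])
    exact (pow_le_pow_left₀ (by positivity) hX 2).trans (sum_mul_sq_le_sq_mul_sq _ _ _)
  have hU : ∑ n ∈ I, ‖U n‖ ^ 2 ≤ C * X := by
    simpa only [Complex.norm_conj] using hdual fun p => (starRingEnd ℂ) (S p)
  rcases (by positivity : 0 ≤ X).eq_or_lt with hX0 | hX0
  · rw [← hX0]; positivity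
  · nlinarith [mul_le_mul_of_nonneg_left hU (by positivity : 0 ≤ ∑ n ∈ I, ‖T n‖ ^ 2)]

lemma floor_ne_zero_and_sq_floor_le_of_one_le_abs {s : ℝ} (hs : 1 ≤ |s|) :
    ⌊s⌋ ≠ 0 ∧ (⌊s⌋ : ℝ) ^ 2 ≤ 4 * s ^ 2 := by
  have hle := Int.floor_le s
  have hgt := Int.sub_one_lt_floor s
  rcases le_abs'.1 hs with hneg | hpos
  · have : (⌊s⌋ : ℝ) ≤ -1 := by linarith
    exact ⟨by rintro h; norm_num [h] at this, by nlinarith⟩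
  · have : (1 : ℝ) ≤ ⌊s⌋ := by exact_mod_cast Int.le_floor.2 (by exact_mod_cast hpos)
    exact ⟨by rintro h; norm_num [h] at this, by nlinarith⟩

section LargeSieve

variable {ι : Type*} [DecidableEq ι] {P : Finset ι} {θ : ι → ℝ} {δ : ℝ}

/-- `p' ↦ ⌊(θ p' - θ p) / δ⌋` sends the other points injectively to nonzero integers `j` with
`|j| δ ≤ 2 |θ p - θ p'|`, so the sum is dominated by `(4 / δ²) ∑_{j ≠ 0} 1 / j²`. -/
lemma sum_erase_one_div_sq_sub_le (hδ : 0 < δ)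
    (hsep : ∀ p ∈ P, ∀ p' ∈ P, p ≠ p' → δ ≤ |θ p - θ p'|) {p : ι} (hp : p ∈ P) :
    ∑ p' ∈ P.erase p, 1 / (θ p - θ p') ^ 2 ≤ 16 / δ ^ 2 := by
  set j : ι → ℤ := fun p' => ⌊(θ p' - θ p) / δ⌋
  have hscaled : ∀ p' ∈ P.erase p, 1 ≤ |(θ p' - θ p) / δ| := fun p' hp' => by
    rw [abs_div, abs_of_pos hδ, le_div_iff₀ hδ, one_mul, abs_sub_comm]
    exact hsep p hp p' (mem_of_mem_erase hp') (ne_of_mem_erase hp').symm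
  have hinj : Set.InjOn j (P.erase p) := fun a ha b hb hab => by
    by_contra hne
    have h := Int.abs_sub_lt_one_of_floor_eq_floor hab
    rw [← sub_div, sub_sub_sub_cancel_right, abs_div, abs_of_pos hδ, div_lt_one hδ] at h
    linarith [hsep a (mem_of_mem_erase ha) b (mem_of_mem_erase hb) hne]
  have hterm : ∀ p' ∈ P.erase p, 1 / (θ p - θ p') ^ 2 ≤ 4 / δ ^ 2 * (1 / (j p' : ℝ) ^ 2) :=
    fun p' hp' => by
    obtain ⟨hj0, hj⟩ := floor_ne_zero_and_sq_floor_le_of_one_le_abs (hscaled p' hp')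
    have hd : (θ p - θ p') ^ 2 = δ ^ 2 * ((θ p' - θ p) / δ) ^ 2 := by field_simp; ring
    have hs : 0 < ((θ p' - θ p) / δ) ^ 2 := by nlinarith [hscaled p' hp', sq_abs ((θ p' - θ p) / δ)]
    rw [hd, div_mul_div_comm, div_le_div_iff₀ (by positivity) (by positivity)]
    nlinarith [mul_le_mul_of_nonneg_left hj (sq_nonneg δ)]
  calc ∑ p' ∈ P.erase p, 1 / (θ p - θ p') ^ 2
      ≤ ∑ p' ∈ P.erase p, 4 / δ ^ 2 * (1 / (j p' : ℝ) ^ 2) := sum_le_sum hterm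
    _ = 4 / δ ^ 2 * ∑ m ∈ (P.erase p).image j, 1 / (m : ℝ) ^ 2 := by
        rw [sum_image hinj, mul_sum]
    _ ≤ 4 / δ ^ 2 * 4 := by gcongr; exact sum_one_div_sq_int_le _
    _ = 16 / δ ^ 2 := by ring

lemma sum_norm_sq_sum_Icc_e_sub_le (hδ : 0 < δ) (hdiam : ∀ p ∈ P, ∀ p' ∈ P, |θ p - θ p'| ≤ 1 / 2)
    (hsep : ∀ p ∈ P, ∀ p' ∈ P, p ≠ p' → δ ≤ |θ p - θ p'|) {p : ι} (hp : p ∈ P) (a b : ℤ) :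
    ∑ p' ∈ P, ‖∑ u ∈ Icc a b, e ((θ p - θ p') * u)‖ ^ 2 ≤ (#(Icc a b) : ℝ) ^ 2 + 4 / δ ^ 2 := by
  have hoff : ∀ p' ∈ P.erase p,
      ‖∑ u ∈ Icc a b, e ((θ p - θ p') * u)‖ ^ 2 ≤ 1 / 4 * (1 / (θ p - θ p') ^ 2) := fun p' hp' => by
    have hφ : 0 < |θ p - θ p'| :=
      hδ.trans_le (hsep p hp p' (mem_of_mem_erase hp') (ne_of_mem_erase hp').symm)
    calc ‖∑ u ∈ Icc a b, e ((θ p - θ p') * u)‖ ^ 2 ≤ (1 / (2 * |θ p - θ p'|)) ^ 2 := by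
          gcongr
          exact norm_sum_Icc_e_mul_le (abs_pos.1 hφ) (hdiam p hp p' (mem_of_mem_erase hp')) a b
      _ = 1 / 4 * (1 / (θ p - θ p') ^ 2) := by
          rw [div_pow, mul_pow, sq_abs, one_pow, ← one_div_mul_one_div]; norm_num
  rw [← add_sum_erase P _ hp]
  gcongr ?_ + ?_
  · simp
  · calc ∑ p' ∈ P.erase p, ‖∑ u ∈ Icc a b, e ((θ p - θ p') * u)‖ ^ 2
        ≤ 1 / 4 * ∑ p' ∈ P.erase p, 1 / (θ p - θ p') ^ 2 := by
          rw [mul_sum]; exact sum_le_sum hoff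
      _ ≤ 1 / 4 * (16 / δ ^ 2) := by gcongr; exact sum_erase_one_div_sq_sub_le hδ hsep hp
      _ = 4 / δ ^ 2 := by ring

lemma large_sieve_dual (hδ : 0 < δ) (hdiam : ∀ p ∈ P, ∀ p' ∈ P, |θ p - θ p'| ≤ 1 / 2)
    (hsep : ∀ p ∈ P, ∀ p' ∈ P, p ≠ p' → δ ≤ |θ p - θ p'|) {A B : ℤ} (hA : A < 0) (hB : 0 ≤ B)
    (c : ι → ℂ) :
    ∑ n ∈ Ioc A B, ‖∑ p ∈ P, c p * e (θ p * n)‖ ^ 2 ≤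
      (4 * ((B : ℝ) - A) ^ 2 + 4 / δ ^ 2) / ((B : ℝ) - A + 1) * ∑ p ∈ P, ‖c p‖ ^ 2 := by
  set K := Icc (A + 1) (2 * B - A)
  set E : ℝ → ℝ := fun φ => ‖∑ u ∈ K, e (φ * u)‖ ^ 2
  have hcardK : (#K : ℝ) ^ 2 = 4 * ((B : ℝ) - A) ^ 2 := by
    rw [← Int.cast_natCast, Int.card_Icc_of_le _ _ (by omega)]; push_cast; ring
  have hEsymm : ∀ p p', E (θ p - θ p') = E (θ p' - θ p) := fun p p' => by
    simp only [E, ← Complex.norm_conj (∑ u ∈ K, e ((θ p' - θ p) * u)), map_sum, conj_e, ← neg_mul,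
      neg_sub]
  have hexpand : ∑ v ∈ K, ∑ u ∈ K, ‖∑ p ∈ P, c p * e (θ p * (u - v : ℤ))‖ ^ 2 ≤
      ∑ p ∈ P, ∑ p' ∈ P, ‖c p‖ * ‖c p'‖ * E (θ p - θ p') := by
    calc ∑ v ∈ K, ∑ u ∈ K, ‖∑ p ∈ P, c p * e (θ p * (u - v : ℤ))‖ ^ 2
        = ‖((∑ v ∈ K, ∑ u ∈ K, ‖∑ p ∈ P, c p * e (θ p * (u - v : ℤ))‖ ^ 2 : ℝ) : ℂ)‖ :=
          (Complex.norm_of_nonneg (by positivity)).symm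
      _ ≤ ∑ p ∈ P, ∑ p' ∈ P, ‖c p * (starRingEnd ℂ) (c p') * (E (θ p - θ p') : ℂ)‖ := by
          rw [ofReal_sum_sum_norm_sq_sum_e_sub]
          exact (norm_sum_le _ _).trans (sum_le_sum fun p _ => norm_sum_le _ _)
      _ = ∑ p ∈ P, ∑ p' ∈ P, ‖c p‖ * ‖c p'‖ * E (θ p - θ p') := by
          simp only [norm_mul, Complex.norm_conj, Complex.norm_of_nonneg (by positivity : 0 ≤ E _)]
  have hschur := sum_sum_mul_mul_le_of_sum_le P (fun p => ‖c p‖) (fun p p' => E (θ p - θ p'))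
    (fun _ _ _ _ => by positivity) hEsymm (R := 4 * ((B : ℝ) - A) ^ 2 + 4 / δ ^ 2) fun p hp => by
      rw [← hcardK]; exact sum_norm_sq_sum_Icc_e_sub_le hδ hdiam hsep hp _ _
  have hshift := mul_sum_Ioc_le_sum_sum_sub
    (g := fun n => ‖∑ p ∈ P, c p * e (θ p * n)‖ ^ 2) (fun _ => by positivity) hA hB
  have hM : (0 : ℝ) < (B : ℝ) - A + 1 := by
    have : (A : ℝ) < B := by exact_mod_cast (hA.trans_le hB)
    linarith
  rw [div_mul_eq_mul_div, le_div_iff₀ hM, mul_comm]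
  exact hshift.trans (hexpand.trans hschur)

lemma large_sieve (hδ : 0 < δ) (hdiam : ∀ p ∈ P, ∀ p' ∈ P, |θ p - θ p'| ≤ 1 / 2)
    (hsep : ∀ p ∈ P, ∀ p' ∈ P, p ≠ p' → δ ≤ |θ p - θ p'|) {A B : ℤ} (hA : A < 0) (hB : 0 ≤ B)
    (T : ℤ → ℂ) :
    ∑ p ∈ P, ‖∑ n ∈ Ioc A B, T n * e (θ p * n)‖ ^ 2 ≤
      (4 * ((B : ℝ) - A) ^ 2 + 4 / δ ^ 2) / ((B : ℝ) - A + 1) * ∑ n ∈ Ioc A B, ‖T n‖ ^ 2 := by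
  have hM : (0 : ℝ) ≤ (B : ℝ) - A := by
    have : (A : ℝ) < B := by exact_mod_cast hA.trans_le hB
    linarith
  exact sum_norm_sq_le_of_dual P _ _ (by positivity) (large_sieve_dual hδ hdiam hsep hA hB) T

end LargeSieve

lemma card_div_two_le_norm_sum_e {ι : Type*} (s : Finset ι) (t : ι → ℝ)
    (ht : ∀ j ∈ s, |t j| ≤ 1 / 6) : (#s : ℝ) / 2 ≤ ‖∑ j ∈ s, e (t j)‖ := by
  have hre : ∀ j ∈ s, 1 / 2 ≤ (e (t j)).re := fun j hj => by
    have habs : |2 * π * t j| ≤ π / 3 := by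
      rw [abs_mul, abs_of_pos (by positivity : (0 : ℝ) < 2 * π)]
      nlinarith [ht j hj, pi_pos]
    rw [re_e, ← cos_abs, ← cos_pi_div_three]
    exact cos_le_cos_of_nonneg_of_le_pi (abs_nonneg _) (by linarith [pi_pos]) habs
  calc (#s : ℝ) / 2 = ∑ _j ∈ s, (1 / 2 : ℝ) := by rw [sum_const, nsmul_eq_mul]; ring
    _ ≤ ∑ j ∈ s, (e (t j)).re := sum_le_sum hre
    _ = (∑ j ∈ s, e (t j)).re := (Complex.re_sum _ _).symm
    _ ≤ ‖∑ j ∈ s, e (t j)‖ := Complex.re_le_norm _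

lemma sum_Icc_e_mul_eq (θ : ℝ) (m k : ℤ) :
    ∑ n ∈ Icc (m - k) (m - 1), e (θ * n) = e (θ * m) * ∑ j ∈ Icc 1 k, e (-(θ * j)) := by
  rw [mul_sum]
  refine sum_nbij' (fun n => m - n) (fun j => m - j) ?_ ?_ (fun _ _ => by omega)
    (fun _ _ => by omega) fun n _ => ?_
  · intro n hn; simp only [mem_Icc] at hn ⊢; omega
  · intro j hj; simp only [mem_Icc] at hj ⊢; omega
  · rw [← e_add]; push_cast; ring_nf

lemma sum_Ioc_sum_window_mul_e_eq {g : ℤ → ℂ} {X k A : ℤ} (hg : ∀ m, g m ≠ 0 → m ∈ Icc 1 X)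
    (hA : A ≤ -k) (θ : ℝ) :
    ∑ n ∈ Ioc A X, (∑ m ∈ Ioc n (n + k), g m) * e (θ * n) =
      (∑ m ∈ Icc 1 X, g m * e (θ * m)) * ∑ j ∈ Icc 1 k, e (-(θ * j)) := by
  have hwindow : ∀ n, ∑ m ∈ Ioc n (n + k), g m = ∑ m ∈ Ioc n (n + k) with m ∈ Icc 1 X, g m :=
    fun n => (sum_filter_of_ne fun m _ => hg m).symm
  simp only [hwindow, sum_mul]
  rw [sum_comm' (t' := Icc 1 X) (s' := fun m => Icc (m - k) (m - 1))]
  · simp only [← mul_sum, sum_Icc_e_mul_eq, ← mul_assoc]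
  · intro n m
    simp only [mem_filter, mem_Ioc, mem_Icc]
    omega

lemma sum_Icc_intCast {M : Type*} [AddCommMonoid M] (h : ℤ → M) (N : ℕ) :
    ∑ m ∈ Icc (1 : ℤ) N, h m = ∑ n ∈ Icc 1 N, h n := by
  refine sum_nbij' Int.toNat Nat.cast ?_ ?_ (fun m hm => ?_) (fun n _ => Int.toNat_natCast n)
    fun m hm => ?_
  · intro m hm; simp only [mem_Icc] at hm ⊢; omega
  · intro n hn; simp only [mem_Icc] at hn ⊢; omega
  · rw [mem_Icc] at hm; exact Int.toNat_of_nonneg (by omega)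
  · rw [mem_Icc] at hm; rw [Int.toNat_of_nonneg (by omega)]

lemma sum_window_mul_e_eq {x : ℝ} (hx : 0 ≤ x) (y : ℝ) {f : ℕ → ℂ}
    (hf : ∀ m : ℕ, f m ≠ 0 → 1 ≤ m ∧ (m : ℝ) ≤ x) (α β : ℝ) :
    ∑ n ∈ Ioc ⌊-y⌋ ⌊x⌋, (∑ m ∈ Ioc n (n + ⌊y⌋), f m.toNat * e (α * m)) * e ((β - α) * n) =
      (∑ n ∈ Icc 1 ⌊x⌋₊, f n * e (β * n)) * ∑ j ∈ Icc 1 ⌊y⌋, e (-((β - α) * j)) := by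
  have hsupp : ∀ m : ℤ, f m.toNat * e (α * m) ≠ 0 → m ∈ Icc 1 ⌊x⌋ := fun m hm => by
    obtain ⟨h1, h2⟩ := hf _ (left_ne_zero_of_mul hm)
    rw [mem_Icc, Int.le_floor]
    refine ⟨by omega, ?_⟩
    rwa [← Int.toNat_of_nonneg (by omega : 0 ≤ m), Int.cast_natCast]
  have hA : ⌊-y⌋ ≤ -⌊y⌋ := by rw [Int.floor_neg]; exact neg_le_neg (Int.floor_le_ceil y)
  rw [sum_Ioc_sum_window_mul_e_eq hsupp hA, ← Int.natCast_floor_eq_floor hx, sum_Icc_intCast]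
  congr 1
  refine sum_congr rfl fun n _ => ?_
  rw [mul_assoc, ← e_add]
  simp only [Int.toNat_natCast, Int.cast_natCast]
  ring_nf

lemma norm_sum_window_mul_e_ge {x y : ℝ} (hx : 0 ≤ x) (hy : 1 ≤ y) {f : ℕ → ℂ}
    (hf : ∀ m : ℕ, f m ≠ 0 → 1 ≤ m ∧ (m : ℝ) ≤ x) {α β : ℝ} (hβ : |β - α| ≤ 1 / (6 * y)) :
    y / 4 * ‖∑ n ∈ Icc 1 ⌊x⌋₊, f n * e (β * n)‖ ≤
      ‖∑ n ∈ Ioc ⌊-y⌋ ⌊x⌋, (∑ m ∈ Ioc n (n + ⌊y⌋), f m.toNat * e (α * m)) * e ((β - α) * n)‖ := by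
  have hy1 : 1 ≤ ⌊y⌋ := Int.le_floor.2 (by exact_mod_cast hy)
  have hfloor : y / 2 ≤ (⌊y⌋ : ℝ) := by
    have : (1 : ℝ) ≤ ⌊y⌋ := by exact_mod_cast hy1
    linarith [Int.sub_one_lt_floor y]
  have hcard : (#(Icc 1 ⌊y⌋) : ℝ) = ⌊y⌋ := by
    rw [← Int.cast_natCast, Int.card_Icc_of_le _ _ (by omega)]; simp
  have hkernel : ∀ j ∈ Icc 1 ⌊y⌋, |-((β - α) * j)| ≤ 1 / 6 := fun j hj => by
    rw [mem_Icc] at hj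
    have hj1 : (1 : ℝ) ≤ j := by exact_mod_cast hj.1
    have hjy : (j : ℝ) ≤ y := (Int.cast_le.2 hj.2).trans (Int.floor_le y)
    rw [abs_neg, abs_mul, abs_of_pos (by linarith : (0 : ℝ) < j)]
    calc |β - α| * j ≤ 1 / (6 * y) * y := by gcongr
      _ = 1 / 6 := by field_simp
  rw [sum_window_mul_e_eq hx y hf, norm_mul, mul_comm]
  gcongr
  calc y / 4 ≤ (#(Icc 1 ⌊y⌋) : ℝ) / 2 := by rw [hcard]; linarith
    _ ≤ _ := card_div_two_le_norm_sum_e _ _ hkernel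

/-- The set `𝒜(Q, y)` for `η = 1 / (6y)`, the fraction `a / q` being encoded as `⟨q, a⟩`. -/
noncomputable def nearbyFractions (Q : ℕ) (α η : ℝ) : Finset (Σ _ : ℕ, ℤ) :=
  (Icc 1 Q).sigma fun q =>
    (Icc ⌈(q : ℝ) * (α - η)⌉ ⌊(q : ℝ) * (α + η)⌋).filter fun a : ℤ => Int.gcd a q = 1

lemma mem_nearbyFractions {Q : ℕ} {α η : ℝ} {p : Σ _ : ℕ, ℤ} :
    p ∈ nearbyFractions Q α η ↔
      p.1 ∈ Icc 1 Q ∧ Int.gcd p.2 p.1 = 1 ∧ |(p.2 : ℝ) / p.1 - α| ≤ η := by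
  simp only [nearbyFractions, mem_sigma, mem_filter, mem_Icc, Int.ceil_le, Int.le_floor]
  refine and_congr_right fun hq => ?_
  have hq0 : (0 : ℝ) < p.1 := by exact_mod_cast hq.1
  rw [abs_sub_le_iff, ← le_div_iff₀' hq0, ← div_le_iff₀' hq0, and_comm]
  constructor <;> rintro ⟨h1, h2, h3⟩ <;> refine ⟨h1, ?_, ?_⟩ <;> linarith

lemma one_div_sq_le_abs_div_sub_div {Q q q' : ℕ} {a a' : ℤ} (hq : q ∈ Icc 1 Q) (hq' : q' ∈ Icc 1 Q)
    (ha : Int.gcd a q = 1) (ha' : Int.gcd a' q' = 1) (hne : (q, a) ≠ (q', a')) :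
    1 / (Q : ℝ) ^ 2 ≤ |(a : ℝ) / q - a' / q'| := by
  rw [mem_Icc] at hq hq'
  have hq0 : (0 : ℝ) < q := by exact_mod_cast hq.1
  have hq0' : (0 : ℝ) < q' := by exact_mod_cast hq'.1
  have hcross : a * q' - a' * q ≠ 0 := fun h => hne <| by
    have hq : (q : ℚ) ≠ 0 := by exact_mod_cast (by omega : q ≠ 0)
    have hq' : (q' : ℚ) ≠ 0 := by exact_mod_cast (by omega : q' ≠ 0)
    have := Rat.div_int_inj (a := a) (b := q) (c := a') (d := q') (by omega) (by omega) ha ha' <| by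
      rw [div_eq_div_iff (by exact_mod_cast hq) (by exact_mod_cast hq')]
      exact_mod_cast (sub_eq_zero.1 h)
    simp_all
  have h1 : (1 : ℝ) ≤ |(a : ℝ) * q' - a' * q| := by exact_mod_cast Int.one_le_abs hcross
  rw [div_sub_div _ _ hq0.ne' hq0'.ne', abs_div, abs_of_pos (mul_pos hq0 hq0'), mul_comm (q : ℝ) a']
  calc 1 / (Q : ℝ) ^ 2 ≤ 1 / (q * q') := by
        gcongr
        rw [sq]; gcongr <;> exact_mod_cast (by omega)
    _ ≤ |(a : ℝ) * q' - a' * q| / (q * q') := by gcongr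

lemma abs_sub_le_of_mem_nearbyFractions {Q : ℕ} {α η : ℝ} {p : Σ _ : ℕ, ℤ}
    (hp : p ∈ nearbyFractions Q α η) : |(p.2 : ℝ) / p.1 - α| ≤ η :=
  (mem_nearbyFractions.1 hp).2.2

lemma one_div_sq_le_abs_sub_of_mem_nearbyFractions {Q : ℕ} {α η : ℝ} {p p' : Σ _ : ℕ, ℤ}
    (hp : p ∈ nearbyFractions Q α η) (hp' : p' ∈ nearbyFractions Q α η) (hne : p ≠ p') :
    1 / (Q : ℝ) ^ 2 ≤ |((p.2 : ℝ) / p.1 - α) - ((p'.2 : ℝ) / p'.1 - α)| := by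
  obtain ⟨hq, ha, -⟩ := mem_nearbyFractions.1 hp
  obtain ⟨hq', ha', -⟩ := mem_nearbyFractions.1 hp'
  rw [sub_sub_sub_cancel_right]
  refine one_div_sq_le_abs_div_sub_div hq hq' ha ha' fun h => hne ?_
  obtain ⟨⟩ := p; obtain ⟨⟩ := p'
  simp_all

lemma abs_sub_sub_le_of_mem_nearbyFractions {Q : ℕ} {α η : ℝ} {p p' : Σ _ : ℕ, ℤ}
    (hp : p ∈ nearbyFractions Q α η) (hp' : p' ∈ nearbyFractions Q α η) :
    |((p.2 : ℝ) / p.1 - α) - ((p'.2 : ℝ) / p'.1 - α)| ≤ 2 * η := by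
  linarith [abs_sub ((p.2 : ℝ) / p.1 - α) ((p'.2 : ℝ) / p'.1 - α),
    abs_sub_le_of_mem_nearbyFractions hp, abs_sub_le_of_mem_nearbyFractions hp']

lemma large_sieve_const_le {x y : ℝ} {Q : ℕ} (hx : 1 ≤ x) (hy : 1 ≤ y) (hyx : y ≤ x)
    (hQ : (Q : ℝ) ^ 2 ≤ x) :
    (4 * ((⌊x⌋ : ℝ) - ⌊-y⌋) ^ 2 + 4 / (1 / (Q : ℝ) ^ 2) ^ 2) / ((⌊x⌋ : ℝ) - ⌊-y⌋ + 1) ≤ 16 * x := by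
  have hMx : x ≤ (⌊x⌋ : ℝ) - ⌊-y⌋ := by linarith [Int.sub_one_lt_floor x, Int.floor_le (-y)]
  have hM3x : (⌊x⌋ : ℝ) - ⌊-y⌋ ≤ 3 * x := by linarith [Int.floor_le x, Int.sub_one_lt_floor (-y)]
  rw [one_div, inv_pow, div_inv_eq_mul, div_le_iff₀ (by linarith)]
  nlinarith [mul_le_mul_of_nonneg_left hQ (sq_nonneg (Q : ℝ))]

/-- **Theorem (main inequality via the large sieve).** There is an absolute `c > 0` such that:
for `x ≥ 1`, `f` supported on the integers of `[1,x]`, real `α`, `1 ≤ y ≤ x`,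
`1 ≤ Q ≤ x^(1/2)`, one has
`Σ_{-y < n ≤ x} |F(n, n+y; α)|² ≥ c (y²/x) Σ_{a/q ∈ 𝒜(Q,y)} |F(x; a/q)|²`,
where `𝒜(Q,y)` is the set of lowest-terms fractions `a/q`, `1 ≤ q ≤ Q`, `gcd(a,q) = 1`,
`|α - a/q| ≤ 1/(6y)` (parametrized below by the coprime pairs `(a, q)` with
`q(α - 1/(6y)) ≤ a ≤ q(α + 1/(6y))`, each rational being counted exactly once). -/
theorem large_sieve_short_interval_lower_bound :
    ∃ c : ℝ, 0 < c ∧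
      ∀ (x : ℝ), 1 ≤ x → ∀ f : ℕ → ℂ, (∀ m : ℕ, f m ≠ 0 → 1 ≤ m ∧ (m : ℝ) ≤ x) →
      ∀ α y Q : ℝ, 1 ≤ y → y ≤ x → 1 ≤ Q → Q ≤ x ^ ((1 : ℝ) / 2) →
        c * (y ^ 2 / x) *
            ∑ q ∈ Finset.Icc 1 ⌊Q⌋₊,
              ∑ a ∈ (Finset.Icc ⌈(q : ℝ) * (α - 1 / (6 * y))⌉
                  ⌊(q : ℝ) * (α + 1 / (6 * y))⌋).filter (fun a : ℤ => Int.gcd a q = 1),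
                ‖∑ n ∈ Finset.Icc 1 ⌊x⌋₊, f n * e ((a : ℝ) / q * n)‖ ^ 2 ≤
          ∑ n ∈ Finset.Ioc ⌊-y⌋ ⌊x⌋,
            ‖∑ m ∈ Finset.Ioc n ⌊(n : ℝ) + y⌋, f m.toNat * e (α * m)‖ ^ 2 := by
  refine ⟨1 / 256, by norm_num, fun x hx f hf α y Q hy hyx hQ hQx => ?_⟩
  set P := nearbyFractions ⌊Q⌋₊ α (1 / (6 * y))
  set F : (Σ _ : ℕ, ℤ) → ℂ := fun p => ∑ n ∈ Icc 1 ⌊x⌋₊, f n * e ((p.2 : ℝ) / p.1 * n)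
  set T : ℤ → ℂ := fun n => ∑ m ∈ Ioc n (n + ⌊y⌋), f m.toNat * e (α * m)
  have hη : 1 / (6 * y) ≤ 1 / 4 := by rw [div_le_div_iff₀ (by positivity) (by norm_num)]; linarith
  have hQx' : (⌊Q⌋₊ : ℝ) ^ 2 ≤ x := (le_sqrt (by positivity) (by positivity)).1
    ((Nat.floor_le (by positivity)).trans (by rwa [sqrt_eq_rpow]))
  have hsieve := large_sieve (P := P) (θ := fun p => p.2 / p.1 - α) (A := ⌊-y⌋) (B := ⌊x⌋)
    (one_div_pos.2 (pow_pos (Nat.cast_pos.2 (Nat.floor_pos.2 hQ)) 2))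
    (fun p hp p' hp' => (abs_sub_sub_le_of_mem_nearbyFractions hp hp').trans (by linarith))
    (fun p hp p' hp' => one_div_sq_le_abs_sub_of_mem_nearbyFractions hp hp')
    (Int.floor_lt.2 (by push_cast; linarith)) (Int.floor_nonneg.2 (by linarith)) T
  have hpoint : ∀ p ∈ P, (y / 4 * ‖F p‖) ^ 2 ≤
      ‖∑ n ∈ Ioc ⌊-y⌋ ⌊x⌋, T n * e ((p.2 / p.1 - α) * n)‖ ^ 2 := fun p hp => by
    gcongr
    exact norm_sum_window_mul_e_ge (by linarith) hy hf (abs_sub_le_of_mem_nearbyFractions hp)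
  rw [sum_sigma']
  simp only [Int.floor_intCast_add]
  calc 1 / 256 * (y ^ 2 / x) * ∑ p ∈ P, ‖F p‖ ^ 2 = (∑ p ∈ P, (y / 4 * ‖F p‖) ^ 2) / (16 * x) := by
        simp only [mul_pow, ← mul_sum]; field_simp; ring
    _ ≤ (16 * x * ∑ n ∈ Ioc ⌊-y⌋ ⌊x⌋, ‖T n‖ ^ 2) / (16 * x) := by
        gcongr
        refine (sum_le_sum hpoint).trans (hsieve.trans ?_)
        gcongr
        exact large_sieve_const_le hx hy hyx hQx'
    _ = ∑ n ∈ Ioc ⌊-y⌋ ⌊x⌋, ‖T n‖ ^ 2 := by field_simp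
end

section
/- There exist absolute constants C ≥ 1 and 0 < c₁ ≤ c₂ such that the following holds. Let α be real, let u be an integer and s ≥ 1 an integer with gcd(u, s) = 1 and |α − u/s| ≤ 1/s², and let Q be a real number with Q ≥ C·s. Then the number of distinct rationals r such that there exists an integer q with Q < q ≤ 2Q and q·r ∈ ℤ, and such that |α − r| ≤ 2/s², lies between c₁·Q²/s² and c₂·Q²/s². -/
/-!
Upper bound: two distinct fractions with denominators in `(Q, 2Q]` are at least `1/(4Q²)` apart,
and all of them lie in an interval of length `4/s²`, so there are at most `16Q²/s² + 1`.

Lower bound: let `c` be an inverse of `u` modulo `s`. For `k ≥ 1` and `m` with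
`d = ck + sm ∈ (Q, 2Q]`, the number `u/s - k/(sd)` has denominator `d` (as `s ∣ ud - k`), and it
lies within `1/s²` of `u/s` when `k ≤ Q/s`. It determines `k/d`, hence `k/m`, so coprime pairs
`(k, m)` give distinct approximations. With `L = Q/s`, letting `k` run up to `L/8` and `m` through
an interval of length `L/2`, a positive proportion of the pairs is coprime, because
`∑_{n ≥ 2} 1/n² = π²/6 - 1 < 2/3`.
-/

open Finset

theorem Set.finite_and_ncard_le_of_pairwise_le_abs_sub {α : Type*} {S : Set α} (f : α → ℝ)
    {a w ε : ℝ} (hε : 0 < ε) (hw : 0 ≤ w) (hS : ∀ x ∈ S, f x ∈ Set.Icc a (a + w))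
    (hsep : S.Pairwise fun x y => ε ≤ |f x - f y|) :
    S.Finite ∧ (S.ncard : ℝ) ≤ w / ε + 1 := by
  set g : α → ℕ := fun x => ⌊(f x - a) / ε⌋₊
  have hmaps : ∀ x ∈ S, g x ∈ (Finset.range (⌊w / ε⌋₊ + 1) : Set ℕ) := by
    intro x hx
    simp only [coe_range, Set.mem_Iio, Nat.lt_succ_iff, g]
    exact Nat.floor_le_floor (by gcongr; linarith [(hS x hx).2])
  have hinj : S.InjOn g := by
    intro x hx y hy hxy
    by_contra hne
    have hx0 : 0 ≤ (f x - a) / ε := div_nonneg (by linarith [(hS x hx).1]) hε.le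
    have hy0 : 0 ≤ (f y - a) / ε := div_nonneg (by linarith [(hS y hy).1]) hε.le
    have hfloor : ⌊(f x - a) / ε⌋ = ⌊(f y - a) / ε⌋ := by
      rw [← Int.natCast_floor_eq_floor hx0, ← Int.natCast_floor_eq_floor hy0]
      exact congrArg _ hxy
    have hlt := Int.abs_sub_lt_one_of_floor_eq_floor hfloor
    rw [← sub_div, sub_sub_sub_cancel_right, abs_div, abs_of_pos hε, div_lt_one hε] at hlt
    exact (hsep hx hy hne).not_gt hlt
  have hfin := (Finset.range (⌊w / ε⌋₊ + 1)).finite_toSet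
  refine ⟨Set.Finite.of_finite_image (hfin.subset (Set.image_subset_iff.2 hmaps)) hinj, ?_⟩
  have hcard := Set.ncard_le_ncard_of_injOn g hmaps hinj hfin
  rw [Set.ncard_coe_finset, card_range] at hcard
  calc (S.ncard : ℝ) ≤ (⌊w / ε⌋₊ : ℝ) + 1 := by exact_mod_cast hcard
    _ ≤ w / ε + 1 := by gcongr; exact Nat.floor_le (by positivity)

theorem Rat.one_div_mul_le_abs_div_sub_div {a b q q' : ℤ} (hq : 0 < q) (hq' : 0 < q')
    (hne : (a : ℚ) / q ≠ b / q') : 1 / ((q : ℚ) * q') ≤ |(a : ℚ) / q - b / q'| := by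
  have hq0 : (q : ℚ) ≠ 0 := by positivity
  have hq0' : (q' : ℚ) ≠ 0 := by positivity
  have hnum : a * q' - b * q ≠ 0 := by
    intro h
    apply hne
    rw [div_eq_div_iff hq0 hq0']
    exact_mod_cast sub_eq_zero.mp h
  have hone : (1 : ℚ) ≤ |((a * q' - b * q : ℤ) : ℚ)| := by exact_mod_cast Int.one_le_abs hnum
  rw [div_sub_div _ _ hq0 hq0', abs_div, abs_of_pos (by positivity : (0 : ℚ) < q * q')]
  push_cast at hone
  rw [mul_comm (q : ℚ) b]
  gcongr

theorem sum_Icc_two_one_div_sq_le (N : ℕ) : ∑ n ∈ Icc 2 N, 1 / (n : ℝ) ^ 2 ≤ 2 / 3 := by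
  have hsub : insert 1 (Icc 2 N) ⊆ range (N + 2) := by
    intro n hn
    simp only [mem_insert, mem_Icc, mem_range] at hn ⊢
    omega
  have hzeta := (sum_le_sum_of_subset_of_nonneg hsub fun n _ _ => by positivity).trans
    (sum_le_hasSum (range (N + 2)) (fun n _ => by positivity) hasSum_zeta_two)
  rw [sum_insert (by simp)] at hzeta
  nlinarith [Real.pi_lt_d2, Real.pi_pos]

theorem Nat.card_filter_dvd_Ioc_le (M ℓ n : ℕ) : #{x ∈ Ioc M (M + ℓ) | n ∣ x} ≤ ℓ / n + 1 := by
  have hsplit : #{x ∈ Ioc 0 M | n ∣ x} + #{x ∈ Ioc M (M + ℓ) | n ∣ x} =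
      #{x ∈ Ioc 0 (M + ℓ) | n ∣ x} := by
    rw [← card_union_of_disjoint (disjoint_filter_filter (Ioc_disjoint_Ioc_of_le le_rfl)),
      ← filter_union, Ioc_union_Ioc_eq_Ioc (Nat.zero_le M) (Nat.le_add_right M ℓ)]
  rw [Nat.Ioc_filter_dvd_card_eq_div, Nat.Ioc_filter_dvd_card_eq_div] at hsplit
  have := Nat.add_div_le_div_add_div_add_one M ℓ n
  omega

theorem card_coprime_pairs_ge (N M ℓ : ℕ) :
    (N * ℓ : ℝ) / 3 - N ^ 2 / 2 ≤ #{p ∈ Ioc 0 N ×ˢ Ioc M (M + ℓ) | p.1.Coprime p.2} := by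
  set P := Ioc 0 N ×ˢ Ioc M (M + ℓ)
  have hbad : {p ∈ P | ¬ p.1.Coprime p.2} ⊆ (Icc 2 N).biUnion
      fun n => {k ∈ Ioc 0 N | n ∣ k} ×ˢ {m ∈ Ioc M (M + ℓ) | n ∣ m} := by
    rintro ⟨k, m⟩ hp
    simp only [P, mem_filter, mem_product, mem_Ioc] at hp
    obtain ⟨⟨⟨hk0, hkN⟩, hm⟩, hcop⟩ := hp
    have hg : 0 < k.gcd m := Nat.gcd_pos_of_pos_left m hk0
    have hgk : k.gcd m ≤ k := Nat.gcd_le_left m hk0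
    simp only [mem_biUnion, mem_Icc, mem_product, mem_filter, mem_Ioc]
    exact ⟨k.gcd m, ⟨by unfold Nat.Coprime at hcop; omega, by omega⟩,
      ⟨⟨by omega, by omega⟩, Nat.gcd_dvd_left k m⟩, ⟨hm, Nat.gcd_dvd_right k m⟩⟩
  have hbad_card : (#{p ∈ P | ¬ p.1.Coprime p.2} : ℝ) ≤
      ∑ n ∈ Icc 2 N, (N / n : ℝ) * (ℓ / n + 1) := by
    refine (Nat.cast_le.2 ((card_le_card hbad).trans card_biUnion_le)).trans ?_
    push_cast
    refine sum_le_sum fun n _ => ?_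
    rw [card_product, Nat.Ioc_filter_dvd_card_eq_div, Nat.cast_mul]
    have hm : (#{x ∈ Ioc M (M + ℓ) | n ∣ x} : ℝ) ≤ ℓ / n + 1 :=
      calc (#{x ∈ Ioc M (M + ℓ) | n ∣ x} : ℝ) ≤ ((ℓ / n : ℕ) : ℝ) + 1 := by
            exact_mod_cast Nat.card_filter_dvd_Ioc_le M ℓ n
        _ ≤ ℓ / n + 1 := by gcongr; exact Nat.cast_div_le
    gcongr
    exact Nat.cast_div_le
  have hsum : ∑ n ∈ Icc 2 N, (N / n : ℝ) * (ℓ / n + 1) ≤ 2 / 3 * (N * ℓ) + N ^ 2 / 2 := by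
    have hterm : ∀ n ∈ Icc 2 N, (N / n : ℝ) * (ℓ / n + 1) ≤ N * ℓ * (1 / (n : ℝ) ^ 2) + N / 2 := by
      intro n hn
      have hn2 : (2 : ℝ) ≤ n := by exact_mod_cast (mem_Icc.1 hn).1
      rw [mul_add, mul_one]
      apply add_le_add (le_of_eq (by field_simp))
      gcongr
    refine (sum_le_sum hterm).trans ?_
    rw [sum_add_distrib, ← mul_sum, sum_const, Nat.card_Icc, nsmul_eq_mul]
    have hcard : ((N + 1 - 2 : ℕ) : ℝ) ≤ N := by exact_mod_cast (by omega : N + 1 - 2 ≤ N)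
    have := sum_Icc_two_one_div_sq_le N
    have hNℓ : (0 : ℝ) ≤ N * ℓ := by positivity
    nlinarith
  have htotal := card_filter_add_card_filter_not (s := P) (fun p : ℕ × ℕ => p.1.Coprime p.2)
  rw [card_product, Nat.card_Ioc, Nat.card_Ioc, Nat.sub_zero, Nat.add_sub_cancel_left] at htotal
  have htotal' : (#{p ∈ P | p.1.Coprime p.2} : ℝ) + #{p ∈ P | ¬ p.1.Coprime p.2} = N * ℓ := by
    exact_mod_cast htotal
  linarith

theorem injOn_div_mul_add_mul (c : ℕ) {s : ℕ} (hs : 0 < s) :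
    Set.InjOn (fun p : ℕ × ℕ => (p.1 : ℚ) / (c * p.1 + s * p.2))
      {p | 0 < p.2 ∧ p.1.Coprime p.2} := by
  rintro ⟨k, m⟩ ⟨hm, hkm⟩ ⟨k', m'⟩ ⟨hm', hkm'⟩ heq
  have hd : (0 : ℚ) < c * k + s * m := by positivity
  have hd' : (0 : ℚ) < c * k' + s * m' := by positivity
  rw [div_eq_div_iff hd.ne' hd'.ne'] at heq
  have hcross : (k : ℚ) * m' = k' * m := by
    have hs' : (s : ℚ) ≠ 0 := by positivity
    apply mul_left_cancel₀ hs'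
    linear_combination heq
  have hratio : ((k : ℤ) : ℚ) / (m : ℤ) = ((k' : ℤ) : ℚ) / (m' : ℤ) := by
    push_cast
    rw [div_eq_div_iff (by positivity) (by positivity)]
    exact hcross
  obtain ⟨hkk', hmm'⟩ := Rat.div_int_inj (by omega) (by omega) (by simpa using hkm)
    (by simpa using hkm') hratio
  simp only [Prod.mk.injEq]
  omega

def dyadicApprox (α δ Q : ℝ) : Set ℚ :=
  {r : ℚ | (∃ q : ℤ, Q < q ∧ q ≤ 2 * Q ∧ ∃ a : ℤ, r = a / q) ∧ |α - r| ≤ δ}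

theorem dyadicApprox_pairwise {α δ Q : ℝ} (hQ : 0 < Q) :
    (dyadicApprox α δ Q).Pairwise fun r r' => 1 / (4 * Q ^ 2) ≤ |(r : ℝ) - r'| := by
  rintro _ ⟨⟨q, hQq, hq2Q, a, rfl⟩, -⟩ _ ⟨⟨q', hQq', hq2Q', a', rfl⟩, -⟩ hne
  have hq : (0 : ℝ) < q := hQ.trans hQq
  have hq' : (0 : ℝ) < q' := hQ.trans hQq'
  have hsep :=
    Rat.one_div_mul_le_abs_div_sub_div (by exact_mod_cast hq) (by exact_mod_cast hq') hne
  have hsepℝ : 1 / ((q : ℝ) * q') ≤ |(a : ℝ) / q - a' / q'| := by exact_mod_cast hsep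
  push_cast
  refine le_trans (one_div_le_one_div_of_le (by positivity) ?_) hsepℝ
  nlinarith

theorem dyadicApprox_finite_and_ncard_le {α δ Q : ℝ} (hQ : 0 < Q) (hδ : 0 ≤ δ) :
    (dyadicApprox α δ Q).Finite ∧ ((dyadicApprox α δ Q).ncard : ℝ) ≤ 8 * δ * Q ^ 2 + 1 := by
  have h := Set.finite_and_ncard_le_of_pairwise_le_abs_sub (S := dyadicApprox α δ Q)
    (fun r : ℚ => (r : ℝ)) (a := α - δ) (w := 2 * δ) (by positivity) (by positivity)
    (fun r hr => ?_) (dyadicApprox_pairwise hQ)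
  · refine ⟨h.1, h.2.trans (le_of_eq ?_)⟩
    field_simp
    ring
  · have := abs_le.1 hr.2
    constructor <;> linarith

theorem sub_div_mem_dyadicApprox {α δ Q : ℝ} {u : ℤ} {s c k m : ℕ} (hs : 0 < s)
    (hc : (s : ℤ) ∣ u * c - 1) (hQ : 0 < Q) (hQd : Q < c * k + s * m)
    (hd2Q : c * k + s * m ≤ 2 * Q) (hδ : |α - u / s| + k / (s * Q) ≤ δ) :
    (u / s - k / (c * k + s * m) / s : ℚ) ∈ dyadicApprox α δ Q := by
  obtain ⟨t, ht⟩ := hc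
  have hd : (0 : ℝ) < c * k + s * m := hQ.trans hQd
  have hdℚ : (c * k + s * m : ℚ) ≠ 0 := by exact_mod_cast hd.ne'
  have hsℚ : (s : ℚ) ≠ 0 := by positivity
  refine ⟨⟨c * k + s * m, by push_cast; exact hQd, by push_cast; exact hd2Q, k * t + u * m, ?_⟩, ?_⟩
  · have htℚ : (u : ℚ) * c - 1 = s * t := by exact_mod_cast ht
    push_cast
    rw [div_div, div_sub_div _ _ hsℚ (mul_ne_zero hdℚ hsℚ),
      div_eq_div_iff (mul_ne_zero hsℚ (mul_ne_zero hdℚ hsℚ)) hdℚ]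
    linear_combination (k : ℚ) * s * (c * k + s * m) * htℚ
  · have hgap : |(u : ℝ) / s - (u / s - k / (c * k + s * m) / s)| ≤ k / (s * Q) := by
      rw [sub_sub_cancel, abs_of_nonneg (by positivity), div_div, mul_comm]
      gcongr
    push_cast
    calc |α - (u / s - k / (c * k + s * m) / s)|
        ≤ |α - u / s| + |(u : ℝ) / s - (u / s - k / (c * k + s * m) / s)| := abs_sub_le _ _ _
      _ ≤ δ := by linarith

theorem card_coprime_pairs_le_ncard_dyadicApprox {α δ Q : ℝ} {u : ℤ} {s N M ℓ : ℕ}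
    (hs : 0 < s) (hu : IsCoprime u s) (hQ : 0 < Q) (hM : Q ≤ s * M)
    (hMℓ : s * (N + M + ℓ) ≤ 2 * Q) (hδ : |α - u / s| + N / (s * Q) ≤ δ) :
    #{p ∈ Ioc 0 N ×ˢ Ioc M (M + ℓ) | p.1.Coprime p.2} ≤ (dyadicApprox α δ Q).ncard := by
  obtain ⟨x, y, hxy⟩ := hu
  have hsℤ : (0 : ℤ) < s := by exact_mod_cast hs
  set c := (x % s).toNat
  have hc_cast : (c : ℤ) = x % s := Int.toNat_of_nonneg (Int.emod_nonneg _ hsℤ.ne')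
  have hcs : c ≤ s := by have := Int.emod_lt_of_pos x hsℤ; omega
  have hc : (s : ℤ) ∣ u * c - 1 :=
    ⟨-y - u * (x / s), by rw [hc_cast, Int.emod_def]; linear_combination hxy⟩
  have hinj : Set.InjOn (fun p : ℕ × ℕ => (u / s - p.1 / (c * p.1 + s * p.2) / s : ℚ))
      {p | 0 < p.2 ∧ p.1.Coprime p.2} :=
    ((sub_right_injective (b := (u / s : ℚ))).comp
      fun _ _ h => (div_left_inj' (by positivity : (s : ℚ) ≠ 0)).1 h).comp_injOn
      (injOn_div_mul_add_mul c hs)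
  have hδ0 : 0 ≤ δ := le_trans (by positivity) hδ
  rw [← Set.ncard_coe_finset]
  refine Set.ncard_le_ncard_of_injOn _ ?_ (hinj.mono ?_)
    (dyadicApprox_finite_and_ncard_le hQ hδ0).1
  · rintro ⟨k, m⟩ hp
    simp only [coe_filter, mem_product, mem_Ioc, Set.mem_ofPred_eq] at hp
    obtain ⟨⟨⟨-, hkN⟩, hMm, hmMℓ⟩, -⟩ := hp
    have hMm' : (M : ℝ) + 1 ≤ m := by exact_mod_cast hMm
    have hd : c * k + s * m ≤ s * (N + M + ℓ) := by
      have := Nat.mul_le_mul hcs hkN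
      have := Nat.mul_le_mul_left s hmMℓ
      nlinarith
    have hd' : (c * k + s * m : ℝ) ≤ s * (N + M + ℓ) := by exact_mod_cast hd
    have hs' : (1 : ℝ) ≤ s := by exact_mod_cast hs
    have hkN' : (k : ℝ) ≤ N := by exact_mod_cast hkN
    refine sub_div_mem_dyadicApprox hs hc hQ (by nlinarith [Nat.cast_nonneg (α := ℝ) (c * k)])
      (by linarith) (le_trans ?_ hδ)
    gcongr
  · rintro ⟨k, m⟩ hp
    simp only [coe_filter, mem_product, mem_Ioc, Set.mem_ofPred_eq] at hp ⊢
    exact ⟨by omega, hp.2⟩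

theorem le_ncard_dyadicApprox {α L : ℝ} {u : ℤ} {s : ℕ} (hs : 0 < s) (hu : IsCoprime u s)
    (happrox : |α - u / s| ≤ 1 / (s : ℝ) ^ 2) (hL : 1000 ≤ L) :
    1 / 100 * L ^ 2 ≤ (dyadicApprox α (2 / (s : ℝ) ^ 2) (s * L)).ncard := by
  set N := ⌊L / 8⌋₊
  set ℓ := ⌊L / 2⌋₊
  have hN := Nat.floor_le (by positivity : 0 ≤ L / 8)
  have hN' := Nat.lt_floor_add_one (L / 8)
  have hℓ := Nat.floor_le (by positivity : 0 ≤ L / 2)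
  have hℓ' := Nat.lt_floor_add_one (L / 2)
  have hM := Nat.le_ceil L
  have hM' := Nat.ceil_lt_add_one (by positivity : 0 ≤ L)
  have hs' : (1 : ℝ) ≤ s := by exact_mod_cast hs
  have hNs : (N : ℝ) / (s * (s * L)) ≤ 1 / (s : ℝ) ^ 2 := by
    rw [div_le_div_iff₀ (by positivity) (by positivity)]
    nlinarith
  have hδ : |α - u / s| + N / (s * (s * L)) ≤ 2 / (s : ℝ) ^ 2 := by
    have h2 : (2 : ℝ) / s ^ 2 = 1 / s ^ 2 + 1 / s ^ 2 := by ring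
    linarith
  have hcard := card_coprime_pairs_le_ncard_dyadicApprox (M := ⌈L⌉₊) (ℓ := ℓ) hs hu
    (by positivity) (by gcongr) (by nlinarith) hδ
  refine le_trans ?_ ((card_coprime_pairs_ge N ⌈L⌉₊ ℓ).trans (Nat.cast_le.2 hcard))
  nlinarith

/-- **Lemma (rational approximations in dyadic ranges).** There are absolute constants
`C ≥ 1` and `0 < c₁ ≤ c₂` such that: if `|α - u/s| ≤ 1/s²` with `gcd(u,s)=1`, `s ≥ 1`, then
for every real `Q ≥ Cs`, the number of distinct rationals `r` expressible with a denominator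
`q ∈ (Q, 2Q]` (i.e. `q·r ∈ ℤ` for some integer `Q < q ≤ 2Q`) and satisfying
`|α - r| ≤ 2/s²` lies between `c₁ Q²/s²` and `c₂ Q²/s²`. -/
theorem count_rational_approximations_dyadic :
    ∃ C : ℝ, 1 ≤ C ∧ ∃ c₁ c₂ : ℝ, 0 < c₁ ∧ c₁ ≤ c₂ ∧
      ∀ (α : ℝ) (u : ℤ) (s : ℕ), 1 ≤ s → Int.gcd u s = 1 →
        |α - (u : ℝ) / s| ≤ 1 / (s : ℝ) ^ 2 →
        ∀ Q : ℝ, C * s ≤ Q →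
          c₁ * Q ^ 2 / (s : ℝ) ^ 2 ≤
            ({r : ℚ | (∃ q : ℤ, (Q : ℝ) < (q : ℝ) ∧ (q : ℝ) ≤ 2 * Q ∧
                ∃ a : ℤ, r = (a : ℚ) / (q : ℚ)) ∧
                |α - (r : ℝ)| ≤ 2 / (s : ℝ) ^ 2}.ncard : ℝ) ∧
          ({r : ℚ | (∃ q : ℤ, (Q : ℝ) < (q : ℝ) ∧ (q : ℝ) ≤ 2 * Q ∧
                ∃ a : ℤ, r = (a : ℚ) / (q : ℚ)) ∧
                |α - (r : ℝ)| ≤ 2 / (s : ℝ) ^ 2}.ncard : ℝ) ≤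
            c₂ * Q ^ 2 / (s : ℝ) ^ 2 := by
  refine ⟨1000, by norm_num, 1 / 100, 17, by norm_num, by norm_num, ?_⟩
  intro α u s hs hu happrox Q hQ
  obtain ⟨L, hL, rfl⟩ : ∃ L : ℝ, 1000 ≤ L ∧ Q = s * L :=
    ⟨Q / s, by rwa [le_div_iff₀ (by positivity)], by field_simp⟩
  have hQs : (s * L) ^ 2 / (s : ℝ) ^ 2 = L ^ 2 := by field_simp
  rw [mul_div_assoc, mul_div_assoc, hQs]
  refine ⟨le_ncard_dyadicApprox hs (Int.isCoprime_iff_gcd_eq_one.2 hu) happrox hL, ?_⟩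
  refine (dyadicApprox_finite_and_ncard_le (by positivity) (by positivity)).2.trans ?_
  have h16 : 8 * (2 / (s : ℝ) ^ 2) * (s * L) ^ 2 = 16 * L ^ 2 := by field_simp; ring
  nlinarith
end

section
/- There is a constant C such that for all x ≥ 2, every integer q with 1 ≤ q ≤ x^(1/2), and every integer a with gcd(a, q) = 1, one has |Σ_{n ≤ x} τ(n) e(an/q) − (x/q)·(log(x/q²) + 2γ − 1)| ≤ C · x^(1/2) · (1 + log q), where the sum is over positive integers n ≤ x and γ is the Euler–Mascheroni constant. -/
/-!
Dirichlet's hyperbola method writes `∑_{n ≤ N} τ(n) f(n)` as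
`2 ∑_{d ≤ K} ∑_{m ≤ N/d} f(dm) - ∑_{d, m ≤ K} f(dm)` with `K = ⌊√N⌋`. For `f(n) = e(an/q)` every
inner sum is geometric in `m`: it equals its length when `q ∣ d`, and otherwise has size at most
`1 / sin(π r/q) ≤ q/(2r) + q/(2(q - r))`, where `r ≡ ad (mod q)`. Since `a` is a unit mod `q`,
`r` runs through every residue once in each block of `q` consecutive `d`, so the columns with
`q ∤ d` contribute `O((K + q)(1 + log q))`. The columns `d = qj` leave
`2 ∑_{j ≤ √x/q} ⌊x/(qj)⌋ - ⌊√x/q⌋ ⌊√x⌋`, and `H_J = log J + γ + O(1/J)` turns this into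
`(x/q)(log(x/q²) + 2γ - 1) + O(√x)`.
-/

open Finset

theorem sum_Icc_card_divisors_smul_eq_sum_prod_filter {M : Type*} [AddCommMonoid M] (N : ℕ)
    (f : ℕ → M) :
    ∑ n ∈ Icc 1 N, n.divisors.card • f n =
      ∑ x ∈ Icc 1 N ×ˢ Icc 1 N with x.1 * x.2 ≤ N, f (x.1 * x.2) := by
  symm
  rw [← sum_fiberwise_of_maps_to (g := fun x => x.1 * x.2) (t := Icc 1 N)]
  · refine sum_congr rfl fun n hn => ?_
    have hfiber : {x ∈ {x ∈ Icc 1 N ×ˢ Icc 1 N | x.1 * x.2 ≤ N} | x.1 * x.2 = n} =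
        n.divisorsAntidiagonal := by
      ext ⟨d, m⟩
      simp only [mem_filter, mem_product, mem_Icc, Nat.mem_divisorsAntidiagonal] at hn ⊢
      constructor
      · rintro ⟨-, rfl⟩
        omega
      · rintro ⟨rfl, hn0⟩
        have hd : 0 < d := Nat.pos_of_ne_zero (left_ne_zero_of_mul hn0)
        have hm : 0 < m := Nat.pos_of_ne_zero (right_ne_zero_of_mul hn0)
        refine ⟨⟨⟨⟨hd, ?_⟩, hm, ?_⟩, hn.2⟩, rfl⟩ <;> nlinarith
    rw [hfiber, sum_congr rfl fun x hx => by rw [(Nat.mem_divisorsAntidiagonal.1 hx).1],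
      sum_const, ← Nat.map_div_right_divisors, card_map]
  · intro x hx
    simp only [mem_filter, mem_product, mem_Icc] at hx ⊢
    exact ⟨Nat.mul_pos hx.1.1.1 hx.1.2.1, hx.2⟩

theorem Nat.le_sqrt_or_le_sqrt_of_mul_le {d m N : ℕ} (h : d * m ≤ N) :
    d ≤ N.sqrt ∨ m ≤ N.sqrt := by
  rcases le_total d m with hdm | hmd
  · exact Or.inl (Nat.le_sqrt.2 ((Nat.mul_le_mul_left d hdm).trans h))
  · exact Or.inr (Nat.le_sqrt.2 ((Nat.mul_le_mul_right m hmd).trans h))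

theorem sum_Icc_card_divisors_smul_eq_hyperbola {M : Type*} [AddCommGroup M] (N : ℕ)
    (f : ℕ → M) :
    ∑ n ∈ Icc 1 N, n.divisors.card • f n =
      2 • ∑ d ∈ Icc 1 N.sqrt, ∑ m ∈ Icc 1 (N / d), f (d * m)
        - ∑ d ∈ Icc 1 N.sqrt, ∑ m ∈ Icc 1 N.sqrt, f (d * m) := by
  set K := N.sqrt
  set R := {x ∈ Icc 1 N ×ˢ Icc 1 N | x.1 * x.2 ≤ N}
  have hA : ∀ x : ℕ × ℕ, x ∈ {x ∈ R | x.1 ≤ K} ↔ x.1 ∈ Icc 1 K ∧ x.2 ∈ Icc 1 (N / x.1) := by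
    rintro ⟨d, m⟩
    simp only [R, mem_filter, mem_product, mem_Icc]
    constructor
    · rintro ⟨⟨⟨⟨hd, -⟩, hm, -⟩, hdm⟩, hdK⟩
      exact ⟨⟨hd, hdK⟩, hm, (Nat.le_div_iff_mul_le hd).2 (by linarith)⟩
    · rintro ⟨⟨hd, hdK⟩, hm, hmN⟩
      have hdm : m * d ≤ N := (Nat.le_div_iff_mul_le hd).1 hmN
      refine ⟨⟨⟨⟨hd, ?_⟩, hm, ?_⟩, by linarith⟩, hdK⟩ <;> nlinarith
  have hsquare : ∀ x : ℕ × ℕ, x ∈ {x ∈ R | x.1 ≤ K} ∩ {x ∈ R | x.2 ≤ K} ↔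
      x.1 ∈ Icc 1 K ∧ x.2 ∈ Icc 1 K := by
    rintro ⟨d, m⟩
    have hKN : K * K ≤ N := Nat.sqrt_le N
    simp only [R, mem_inter, mem_filter, mem_product, mem_Icc]
    constructor
    · rintro ⟨⟨⟨⟨⟨hd, -⟩, hm, -⟩, -⟩, hdK⟩, -, hmK⟩
      exact ⟨⟨hd, hdK⟩, hm, hmK⟩
    · rintro ⟨⟨hd, hdK⟩, hm, hmK⟩
      have hdm : d * m ≤ N := le_trans (Nat.mul_le_mul hdK hmK) hKN
      refine ⟨⟨⟨⟨⟨hd, ?_⟩, hm, ?_⟩, hdm⟩, hdK⟩, ⟨⟨⟨hd, ?_⟩, hm, ?_⟩, hdm⟩, hmK⟩ <;> nlinarith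
  have hcover : R = {x ∈ R | x.1 ≤ K} ∪ {x ∈ R | x.2 ≤ K} := by
    rw [← filter_or, filter_true_of_mem]
    exact fun x hx => Nat.le_sqrt_or_le_sqrt_of_mul_le (mem_filter.1 hx).2
  have hswap : ∑ x ∈ R with x.2 ≤ K, f (x.1 * x.2) = ∑ x ∈ R with x.1 ≤ K, f (x.1 * x.2) :=
    sum_nbij' Prod.swap Prod.swap (by simp [R, mul_comm, and_comm])
      (by simp [R, mul_comm, and_comm])
      (by simp) (by simp) (by simp [mul_comm])
  have hunion := sum_union_inter (s₁ := {x ∈ R | x.1 ≤ K}) (s₂ := {x ∈ R | x.2 ≤ K})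
    (f := fun x => f (x.1 * x.2))
  rw [← hcover, hswap, sum_finset_product {x ∈ R | x.1 ≤ K} (Icc 1 K) (fun d => Icc 1 (N / d)) hA,
    sum_finset_product _ (Icc 1 K) (fun _ => Icc 1 K) hsquare] at hunion
  rw [sum_Icc_card_divisors_smul_eq_sum_prod_filter, eq_sub_iff_add_eq, hunion, two_nsmul]

theorem norm_sum_Icc_pow_le {w : ℂ} (hw : ‖w‖ = 1) (hw1 : w ≠ 1) (n : ℕ) :
    ‖∑ m ∈ Icc 1 n, w ^ m‖ ≤ 2 / ‖w - 1‖ := by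
  rw [← Ico_add_one_right_eq_Icc, geom_sum_Ico hw1 (by omega), norm_div]
  gcongr
  calc ‖w ^ (n + 1) - w ^ 1‖ ≤ ‖w ^ (n + 1)‖ + ‖w ^ 1‖ := norm_sub_le _ _
    _ = 2 := by rw [norm_pow, norm_pow, hw]; norm_num

theorem Real.inv_sin_pi_mul_le {t : ℝ} (ht0 : 0 < t) (ht1 : t < 1) :
    (Real.sin (Real.pi * t))⁻¹ ≤ (2 * t)⁻¹ + (2 * (1 - t))⁻¹ := by
  wlog ht : t ≤ 1 / 2 generalizing t
  · have h := this (t := 1 - t) (by linarith) (by linarith) (by linarith)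
    rwa [sub_sub_cancel, add_comm, mul_sub, mul_one, Real.sin_pi_sub] at h
  have hsin : 2 * t ≤ Real.sin (Real.pi * t) := by
    have := Real.mul_le_sin (x := Real.pi * t) (by positivity) (by nlinarith [Real.pi_pos])
    rwa [← mul_assoc, div_mul_cancel₀ _ Real.pi_ne_zero] at this
  calc (Real.sin (Real.pi * t))⁻¹ ≤ (2 * t)⁻¹ := inv_anti₀ (by positivity) hsin
    _ ≤ (2 * t)⁻¹ + (2 * (1 - t))⁻¹ := le_add_of_nonneg_right (inv_pos.2 (by linarith)).le

theorem Nat.sum_Icc_filter_dvd {M : Type*} [AddCommMonoid M] {q : ℕ} (hq : 0 < q) (K : ℕ)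
    (F : ℕ → M) : ∑ d ∈ Icc 1 K with q ∣ d, F d = ∑ j ∈ Icc 1 (K / q), F (q * j) := by
  symm
  refine sum_nbij' (q * ·) (· / q) (fun j hj => ?_) (fun d hd => ?_) (fun j _ => ?_)
    (fun d hd => ?_) (fun _ _ => rfl)
  · simp only [mem_Icc, Nat.le_div_iff_mul_le hq] at hj
    simp only [mem_filter, mem_Icc]
    exact ⟨⟨Nat.mul_pos hq hj.1, by linarith⟩, dvd_mul_right q j⟩
  · simp only [mem_filter, mem_Icc] at hd
    obtain ⟨⟨hd1, hdK⟩, j, rfl⟩ := hd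
    simp only [mem_Icc, Nat.mul_div_cancel_left j hq, Nat.le_div_iff_mul_le hq]
    exact ⟨Nat.pos_of_ne_zero (by rintro rfl; simp at hd1), by linarith⟩
  · exact Nat.mul_div_cancel_left j hq
  · exact Nat.mul_div_cancel' (mem_filter.1 hd).2

namespace ZMod

variable {M : Type*} [AddCommMonoid M] {q : ℕ} [NeZero q]

theorem sum_range_natCast (G : ZMod q → M) : ∑ d ∈ range q, G d = ∑ z, G z :=
  sum_nbij' (fun d => (d : ZMod q)) val (by simp) (by simp [val_lt])
    (fun _ hd => val_cast_of_lt (mem_range.1 hd)) (fun z _ => natCast_zmod_val z) (fun _ _ => rfl)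

theorem sum_range_mul_natCast (n : ℕ) (G : ZMod q → M) :
    ∑ d ∈ range (n * q), G d = n • ∑ z, G z := by
  induction n with
  | zero => simp
  | succ n ih =>
    rw [Nat.succ_mul, sum_range_add, ih, succ_nsmul, ← sum_range_natCast]
    simp

theorem sum_Icc_natCast_le {G : ZMod q → ℝ} (hG : ∀ z, 0 ≤ G z) (K : ℕ) :
    q * ∑ d ∈ Icc 1 K, G d ≤ (K + q) * ∑ z, G z := by
  have hq : 0 < q := Nat.pos_of_ne_zero (NeZero.ne q)
  have hsub : Icc 1 K ⊆ range ((K / q + 1) * q) := fun d hd => by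
    simp only [mem_Icc, mem_range] at hd ⊢
    have := Nat.lt_div_mul_add hq (a := K)
    linarith
  have hblocks : (K / q + 1) * q ≤ K + q := by
    rw [Nat.succ_mul]; exact Nat.add_le_add_right (Nat.div_mul_le_self K q) q
  calc q * ∑ d ∈ Icc 1 K, G d ≤ q * ∑ d ∈ range ((K / q + 1) * q), G d := by
        gcongr
        exact fun _ _ _ => hG _
    _ = ((K / q + 1) * q : ℕ) * ∑ z, G z := by
        rw [sum_range_mul_natCast, nsmul_eq_mul]; push_cast; ring
    _ ≤ (K + q) * ∑ z, G z := by
        gcongr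
        · exact sum_nonneg fun z _ => hG z
        · exact_mod_cast hblocks

theorem sum_inv_val_le : ∑ z : ZMod q, (z.val : ℝ)⁻¹ ≤ 1 + Real.log q := by
  rw [← sum_range_natCast]
  calc ∑ d ∈ range q, ((d : ZMod q).val : ℝ)⁻¹ = ∑ d ∈ range q, (d : ℝ)⁻¹ :=
        sum_congr rfl fun d hd => by rw [val_cast_of_lt (mem_range.1 hd)]
    _ ≤ ∑ d ∈ range (q + 1), (d : ℝ)⁻¹ :=
        sum_le_sum_of_subset_of_nonneg (range_subset_range.2 q.le_succ) fun _ _ _ => by positivity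
    _ = harmonic q := by simp [sum_range_succ', harmonic] -- the `d = 0` term is `0⁻¹ = 0`
    _ ≤ 1 + Real.log q := harmonic_le_one_add_log q

theorem sum_inv_val_mul_add_inv_val_neg_mul_le {u : ZMod q} (hu : IsUnit u) :
    ∑ z, (((u * z).val : ℝ)⁻¹ + ((-(u * z)).val : ℝ)⁻¹) ≤ 2 * (1 + Real.log q) := by
  have hmul (f : ZMod q → ℝ) : ∑ z, f (u * z) = ∑ z, f z :=
    Equiv.sum_comp (Units.mulLeft hu.unit) f
  have hneg : ∑ z : ZMod q, ((-z).val : ℝ)⁻¹ = ∑ z : ZMod q, (z.val : ℝ)⁻¹ :=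
    Equiv.sum_comp (Equiv.neg _) fun z : ZMod q => (z.val : ℝ)⁻¹
  rw [sum_add_distrib, hmul (fun z => (z.val : ℝ)⁻¹), hmul (fun z => ((-z).val : ℝ)⁻¹),
    hneg, ← two_mul]
  gcongr
  exact sum_inv_val_le

theorem norm_sum_Icc_stdAddChar_pow_le {z : ZMod q} (hz : z ≠ 0) (n : ℕ) :
    ‖∑ m ∈ Icc 1 n, stdAddChar z ^ m‖ ≤ q / 2 * ((z.val : ℝ)⁻¹ + ((-z).val : ℝ)⁻¹) := by
  have hq : (0 : ℝ) < q := by exact_mod_cast Nat.pos_of_ne_zero (NeZero.ne q)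
  have hv0 : 0 < z.val := Nat.pos_of_ne_zero ((val_ne_zero z).2 hz)
  have hvq : z.val < q := val_lt z
  set t : ℝ := z.val / q with ht
  have ht0 : 0 < t := by positivity
  have ht1 : t < 1 := (div_lt_one hq).2 (by exact_mod_cast hvq)
  have hsin : 0 < Real.sin (Real.pi * t) :=
    Real.sin_pos_of_pos_of_lt_pi (by positivity) (by nlinarith [Real.pi_pos])
  have hψ : (stdAddChar z : ℂ) = Complex.exp (Complex.I * (2 * Real.pi * t : ℝ)) := by
    rw [stdAddChar_apply, toCircle_apply, ht]; push_cast; ring_nf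
  have hnorm : ‖stdAddChar z - 1‖ = 2 * Real.sin (Real.pi * t) := by
    rw [hψ, Complex.norm_exp_I_mul_ofReal_sub_one, norm_mul,
      show 2 * Real.pi * t / 2 = Real.pi * t by ring, Real.norm_of_nonneg hsin.le]
    norm_num
  have hψ1 : stdAddChar z ≠ 1 := by
    intro h; rw [h, sub_self, norm_zero] at hnorm; linarith
  have hψnorm : ‖stdAddChar z‖ = 1 := by rw [hψ, Complex.norm_exp_I_mul_ofReal]
  calc ‖∑ m ∈ Icc 1 n, stdAddChar z ^ m‖ ≤ 2 / ‖stdAddChar z - 1‖ :=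
        norm_sum_Icc_pow_le hψnorm hψ1 n
    _ = (Real.sin (Real.pi * t))⁻¹ := by rw [hnorm]; field_simp
    _ ≤ (2 * t)⁻¹ + (2 * (1 - t))⁻¹ := Real.inv_sin_pi_mul_le ht0 ht1
    _ = q / 2 * ((z.val : ℝ)⁻¹ + ((-z).val : ℝ)⁻¹) := by
      rw [neg_val, if_neg hz, Nat.cast_sub hvq.le, ht]
      have : (z.val : ℝ) < q := by exact_mod_cast hvq
      have : (q : ℝ) - z.val ≠ 0 := by linarith
      field_simp

end ZMod

open ZMod in
theorem e_div_mul_natCast_mul {q : ℕ} [NeZero q] (a : ℤ) (d m : ℕ) :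
    e (a / q * ↑(d * m)) = stdAddChar ((a : ZMod q) * (d : ZMod q)) ^ m := by
  rw [← AddChar.map_nsmul_eq_pow, nsmul_eq_mul,
    show (m : ZMod q) * (a * d) = ((a * d * m : ℤ) : ZMod q) by push_cast; ring, stdAddChar_coe, e]
  congr 1
  push_cast
  ring

open ZMod in
theorem norm_sum_Icc_sum_Icc_e_sub_le {q : ℕ} [NeZero q] {a : ℤ} (ha : Int.gcd a q = 1) (K : ℕ)
    (M : ℕ → ℕ) :
    ‖∑ d ∈ Icc 1 K, ∑ m ∈ Icc 1 (M d), e (a / q * ↑(d * m)) -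
        ∑ j ∈ Icc 1 (K / q), (M (q * j) : ℂ)‖ ≤ (K + q) * (1 + Real.log q) := by
  have hq : 0 < q := Nat.pos_of_ne_zero (NeZero.ne q)
  set u : ZMod q := (a : ZMod q)
  have hu : IsUnit u :=
    (coe_int_isUnit_iff_isCoprime a q).2 (Int.isCoprime_iff_gcd_eq_one.2 (by rwa [Int.gcd_comm]))
  set W : ZMod q → ℝ := fun z => (z.val : ℝ)⁻¹ + ((-z).val : ℝ)⁻¹
  have hW : ∀ z, 0 ≤ W (u * z) := fun z => by positivity
  set col : ℕ → ℂ := fun d => ∑ m ∈ Icc 1 (M d), e (a / q * ↑(d * m))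
  have hmult : ∑ d ∈ Icc 1 K with q ∣ d, col d = ∑ j ∈ Icc 1 (K / q), (M (q * j) : ℂ) := by
    rw [Nat.sum_Icc_filter_dvd hq]
    refine sum_congr rfl fun j _ => ?_
    simp only [col]
    rw [sum_congr rfl fun m _ => e_div_mul_natCast_mul a (q * j) m]
    simp
  have herr : ∀ d ∈ {d ∈ Icc 1 K | ¬ q ∣ d}, ‖col d‖ ≤ q / 2 * W (u * d) := fun d hd => by
    have hud : u * d ≠ 0 := by
      rw [Ne, hu.mul_right_eq_zero, natCast_eq_zero_iff]; exact (mem_filter.1 hd).2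
    simpa only [col, e_div_mul_natCast_mul] using norm_sum_Icc_stdAddChar_pow_le hud (M d)
  calc ‖∑ d ∈ Icc 1 K, col d - ∑ j ∈ Icc 1 (K / q), (M (q * j) : ℂ)‖
      = ‖∑ d ∈ Icc 1 K with ¬ q ∣ d, col d‖ := by
        rw [← sum_filter_add_sum_filter_not _ (q ∣ ·), hmult, add_sub_cancel_left]
    _ ≤ ∑ d ∈ Icc 1 K with ¬ q ∣ d, q / 2 * W (u * d) := norm_sum_le_of_le _ herr
    _ ≤ ∑ d ∈ Icc 1 K, q / 2 * W (u * d) :=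
        sum_le_sum_of_subset_of_nonneg (filter_subset _ _) fun d _ _ => by positivity
    _ = (q * ∑ d ∈ Icc 1 K, W (u * d)) / 2 := by rw [← mul_sum]; ring
    _ ≤ ((K + q) * ∑ z, W (u * z)) / 2 := by gcongr ?_ / 2; exact sum_Icc_natCast_le hW K
    _ ≤ ((K + q) * (2 * (1 + Real.log q))) / 2 := by
        gcongr ((K + q) * ?_) / 2; exact sum_inv_val_mul_add_inv_val_neg_mul_le hu
    _ = (K + q) * (1 + Real.log q) := by ring

theorem norm_sum_card_divisors_mul_e_sub_le {q : ℕ} [NeZero q] {a : ℤ} (ha : Int.gcd a q = 1)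
    (N : ℕ) :
    ‖∑ n ∈ Icc 1 N, (n.divisors.card : ℂ) * e (a / q * n) -
        (2 * ∑ j ∈ Icc 1 (N.sqrt / q), ((N / (q * j) : ℕ) : ℂ) - (N.sqrt / q : ℕ) * N.sqrt)‖ ≤
      3 * (N.sqrt + q) * (1 + Real.log q) := by
  set K := N.sqrt
  have hlong := norm_sum_Icc_sum_Icc_e_sub_le ha K (N / ·)
  have hsquare := norm_sum_Icc_sum_Icc_e_sub_le ha K fun _ => K
  rw [sum_const, Nat.card_Icc, add_tsub_cancel_right, nsmul_eq_mul] at hsquare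
  have hhyp := sum_Icc_card_divisors_smul_eq_hyperbola N fun n => e (a / q * n)
  simp only [nsmul_eq_mul, Nat.cast_ofNat] at hhyp
  rw [hhyp]
  set S₁ := ∑ d ∈ Icc 1 K, ∑ m ∈ Icc 1 (N / d), e (a / q * ↑(d * m))
  set S₂ := ∑ d ∈ Icc 1 K, ∑ m ∈ Icc 1 K, e (a / q * ↑(d * m))
  set M₁ := ∑ j ∈ Icc 1 (K / q), ((N / (q * j) : ℕ) : ℂ)
  calc ‖2 * S₁ - S₂ - (2 * M₁ - (K / q : ℕ) * K)‖
      = ‖2 * (S₁ - M₁) - (S₂ - (K / q : ℕ) * K)‖ := by ring_nf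
    _ ≤ 2 * ‖S₁ - M₁‖ + ‖S₂ - (K / q : ℕ) * K‖ := by
        rw [← RCLike.norm_two (K := ℂ), ← norm_mul]; exact norm_sub_le _ _
    _ ≤ 3 * (K + q) * (1 + Real.log q) := by linarith

theorem Real.log_sub_log_le_div {a b : ℝ} (ha : 0 < a) (hb : 0 < b) :
    Real.log b - Real.log a ≤ (b - a) / a := by
  rw [← Real.log_div hb.ne' ha.ne', sub_div, div_self ha.ne']
  exact Real.log_le_sub_one_of_pos (div_pos hb ha)

theorem abs_harmonic_sub_log_sub_eulerMascheroniConstant_le {n : ℕ} (hn : n ≠ 0) :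
    |harmonic n - Real.log n - Real.eulerMascheroniConstant| ≤ (n : ℝ)⁻¹ := by
  have hlower := Real.eulerMascheroniConstant_lt_eulerMascheroniSeq' n
  have hupper := Real.eulerMascheroniSeq_lt_eulerMascheroniConstant n
  rw [Real.eulerMascheroniSeq', if_neg hn] at hlower
  rw [Real.eulerMascheroniSeq] at hupper
  have hpos : (0 : ℝ) < n := by exact_mod_cast Nat.pos_of_ne_zero hn
  have hlog := Real.log_sub_log_le_div hpos (by positivity : (0 : ℝ) < n + 1)
  rw [add_sub_cancel_left, one_div] at hlog
  rw [abs_le]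
  constructor <;> linarith

theorem abs_sum_floor_div_sub_mul_harmonic_le {y : ℝ} (hy : 0 ≤ y) (n : ℕ) :
    |∑ j ∈ Icc 1 n, (⌊y / j⌋₊ : ℝ) - y * harmonic n| ≤ n := by
  rw [harmonic_eq_sum_Icc]
  push_cast
  rw [mul_sum, ← sum_sub_distrib]
  calc |∑ j ∈ Icc 1 n, ((⌊y / j⌋₊ : ℝ) - y * (j : ℝ)⁻¹)|
      ≤ ∑ j ∈ Icc 1 n, |(⌊y / j⌋₊ : ℝ) - y * (j : ℝ)⁻¹| := abs_sum_le_sum_abs _ _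
    _ ≤ ∑ _j ∈ Icc 1 n, (1 : ℝ) := sum_le_sum fun j _ => by
        have hle := Nat.floor_le (by positivity : 0 ≤ y / (j : ℝ))
        have hlt := Nat.sub_one_lt_floor (y / (j : ℝ))
        rw [← div_eq_mul_inv, abs_le]
        constructor <;> linarith
    _ = n := by simp

theorem abs_harmonic_floor_sub_log_sub_eulerMascheroniConstant_le {u : ℝ} (hu : 1 ≤ u) :
    |harmonic ⌊u⌋₊ - Real.log u - Real.eulerMascheroniConstant| ≤ 2 / ⌊u⌋₊ := by
  set J := ⌊u⌋₊
  have hJ : J ≠ 0 := (Nat.floor_pos.2 hu).ne'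
  have hJ0 : (0 : ℝ) < J := by exact_mod_cast Nat.pos_of_ne_zero hJ
  have hJu : (J : ℝ) ≤ u := Nat.floor_le (by linarith)
  have huJ : u < J + 1 := Nat.lt_floor_add_one u
  have hharm := abs_harmonic_sub_log_sub_eulerMascheroniConstant_le hJ
  have hlog_le := Real.log_sub_log_le_div hJ0 (by linarith : 0 < u)
  have hlog_ge := Real.log_le_log hJ0 hJu
  have hdiv : (u - J) / J ≤ (J : ℝ)⁻¹ := by
    rw [div_le_iff₀ hJ0, inv_mul_cancel₀ hJ0.ne']; linarith
  rw [abs_le] at hharm ⊢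
  constructor <;> linarith [show (2 : ℝ) / J = 2 * (J : ℝ)⁻¹ from div_eq_mul_inv _ _]

theorem abs_mul_sub_floor_mul_floor_le {u s : ℝ} (hu : 0 ≤ u) (hs : 0 ≤ s) :
    |u * s - ⌊u⌋₊ * ⌊s⌋₊| ≤ u + s := by
  have hu₁ : (⌊u⌋₊ : ℝ) ≤ u := Nat.floor_le hu
  have hu₂ : u - 1 < ⌊u⌋₊ := Nat.sub_one_lt_floor u
  have hs₁ : (⌊s⌋₊ : ℝ) ≤ s := Nat.floor_le hs
  have hs₂ : s - 1 < ⌊s⌋₊ := Nat.sub_one_lt_floor s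
  rw [abs_le]
  constructor <;> nlinarith [Nat.cast_nonneg (α := ℝ) ⌊u⌋₊, Nat.cast_nonneg (α := ℝ) ⌊s⌋₊]

theorem abs_two_mul_sum_floor_div_sub_le {u s : ℝ} (hu : 1 ≤ u) (hus : u ≤ s) :
    |2 * ∑ j ∈ Icc 1 ⌊u⌋₊, (⌊u * s / j⌋₊ : ℝ) - ⌊u⌋₊ * ⌊s⌋₊ -
        u * s * (2 * Real.log u + 2 * Real.eulerMascheroniConstant - 1)| ≤ 12 * s := by
  set J := ⌊u⌋₊
  set γ := Real.eulerMascheroniConstant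
  have hJ0 : (0 : ℝ) < J := by exact_mod_cast Nat.floor_pos.2 hu
  have hJu : (J : ℝ) ≤ u := Nat.floor_le (by linarith)
  have huJ : u < J + 1 := Nat.lt_floor_add_one u
  have hus0 : 0 < u * s := by nlinarith
  have hfloor := abs_sum_floor_div_sub_mul_harmonic_le hus0.le J
  have hrect := abs_mul_sub_floor_mul_floor_le (by linarith : 0 ≤ u) (by linarith : 0 ≤ s)
  have hharm : |2 * (u * s) * (harmonic J - Real.log u - γ)| ≤ 8 * s := by
    have hJ2 : u / J ≤ 2 := by
      rw [div_le_iff₀ hJ0]; linarith [show (1 : ℝ) ≤ J by exact_mod_cast Nat.floor_pos.2 hu]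
    calc |2 * (u * s) * (harmonic J - Real.log u - γ)|
        = 2 * (u * s) * |harmonic J - Real.log u - γ| := by
          rw [abs_mul, abs_of_pos (by linarith : (0 : ℝ) < 2 * (u * s))]
      _ ≤ 2 * (u * s) * (2 / J) := by
          gcongr; exact abs_harmonic_floor_sub_log_sub_eulerMascheroniConstant_le hu
      _ = 4 * (u / J) * s := by ring
      _ ≤ 4 * 2 * s := by gcongr; linarith
      _ = 8 * s := by ring
  set A := 2 * (∑ j ∈ Icc 1 J, (⌊u * s / j⌋₊ : ℝ) - u * s * harmonic J)
  set B := 2 * (u * s) * (harmonic J - Real.log u - γ)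
  have hA : |A| ≤ 2 * s := by rw [abs_mul, abs_two]; linarith
  calc _ = |A + B + (u * s - J * ⌊s⌋₊)| := by congr 1; ring
    _ ≤ 12 * s := by linarith [abs_add_le (A + B) (u * s - J * ⌊s⌋₊), abs_add_le A B]

theorem Real.nat_floor_real_sqrt_eq_nat_sqrt_floor {x : ℝ} (hx : 0 ≤ x) :
    ⌊√x⌋₊ = ⌊x⌋₊.sqrt := by
  rw [Nat.eq_sqrt]
  have hle : (⌊√x⌋₊ : ℝ) ≤ √x := Nat.floor_le (Real.sqrt_nonneg x)
  have hlt : √x < ⌊√x⌋₊ + 1 := Nat.lt_floor_add_one _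
  have hsq := Real.mul_self_sqrt hx
  constructor
  · exact Nat.le_floor (by push_cast; nlinarith [Real.sqrt_nonneg x])
  · exact (Nat.floor_lt hx).2 (by push_cast; nlinarith [Real.sqrt_nonneg x])

theorem abs_major_arc_main_term_sub_le {x : ℝ} {q : ℕ} (hq : 1 ≤ q) (hqx : q ≤ √x) :
    |2 * ∑ j ∈ Icc 1 (⌊x⌋₊.sqrt / q), ((⌊x⌋₊ / (q * j) : ℕ) : ℝ) -
        (⌊x⌋₊.sqrt / q : ℕ) * ⌊x⌋₊.sqrt -
        x / q * (Real.log (x / q ^ 2) + 2 * Real.eulerMascheroniConstant - 1)| ≤ 12 * √x := by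
  have hq0 : (0 : ℝ) < q := by exact_mod_cast hq
  have hx : 0 ≤ x := Real.sqrt_pos.1 (hq0.trans_le hqx) |>.le
  set u := √x / q
  have hu : 1 ≤ u := (one_le_div hq0).2 hqx
  have hus : u ≤ √x := div_le_self (Real.sqrt_nonneg x) (by exact_mod_cast hq)
  have hprod : u * √x = x / q := by rw [div_mul_eq_mul_div, Real.mul_self_sqrt hx]
  have hK := Real.nat_floor_real_sqrt_eq_nat_sqrt_floor hx
  have hJ : ⌊u⌋₊ = ⌊x⌋₊.sqrt / q := by rw [Nat.floor_div_natCast, hK]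
  have hfloor (j : ℕ) : ⌊u * √x / j⌋₊ = ⌊x⌋₊ / (q * j) := by
    rw [hprod, div_div, ← Nat.cast_mul, Nat.floor_div_natCast]
  have hlog : Real.log (x / q ^ 2) = 2 * Real.log u := by
    rw [show x / q ^ 2 = u ^ 2 by rw [div_pow, Real.sq_sqrt hx], Real.log_pow, Nat.cast_ofNat]
  have h := abs_two_mul_sum_floor_div_sub_le hu hus
  simp only [hfloor, hJ, hK] at h
  rwa [hprod, ← hlog] at h

/-- **Lemma (divisor exponential sum at rationals).** There is `C` such that for all `x ≥ 2`,
all integers `1 ≤ q ≤ x^(1/2)` and all `a` with `gcd(a,q) = 1`, one has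
`|Σ_{n ≤ x} τ(n) e(an/q) - (x/q)(log(x/q²) + 2γ - 1)| ≤ C x^(1/2) (1 + log q)`. -/
theorem divisor_exponential_sum_major_arc :
    ∃ C : ℝ, ∀ x : ℝ, 2 ≤ x → ∀ q : ℕ, 1 ≤ q → (q : ℝ) ≤ x ^ ((1 : ℝ) / 2) →
      ∀ a : ℤ, Int.gcd a q = 1 →
      ‖(∑ n ∈ Finset.Icc 1 ⌊x⌋₊, (n.divisors.card : ℂ) * e ((a : ℝ) / q * n)) -
          (x / q : ℂ) * ((Real.log (x / (q : ℝ) ^ 2) : ℂ) +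
            2 * (Real.eulerMascheroniConstant : ℂ) - 1)‖ ≤
        C * x ^ ((1 : ℝ) / 2) * (1 + Real.log q) := by
  refine ⟨18, fun x hx q hq hqx a ha => ?_⟩
  have : NeZero q := ⟨by omega⟩
  rw [← Real.sqrt_eq_rpow] at hqx ⊢
  set N := ⌊x⌋₊
  set J := N.sqrt / q
  set M : ℝ := 2 * ∑ j ∈ Icc 1 J, ((N / (q * j) : ℕ) : ℝ) - J * N.sqrt
  set main : ℝ := x / q * (Real.log (x / q ^ 2) + 2 * Real.eulerMascheroniConstant - 1)
  have hK : (N.sqrt : ℝ) ≤ √x := by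
    rw [← Real.nat_floor_real_sqrt_eq_nat_sqrt_floor (by linarith)]
    exact Nat.floor_le (Real.sqrt_nonneg x)
  have hlog : 0 ≤ Real.log q := Real.log_nonneg (by exact_mod_cast hq)
  have hM : ‖((M : ℝ) : ℂ) - (main : ℂ)‖ ≤ 12 * √x := by
    rw [← Complex.ofReal_sub, Complex.norm_real, Real.norm_eq_abs]
    exact abs_major_arc_main_term_sub_le hq hqx
  have hS := norm_sum_card_divisors_mul_e_sub_le ha N
  push_cast [M, main] at hM ⊢
  calc _ ≤ 3 * (N.sqrt + q) * (1 + Real.log q) + 12 * √x :=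
        (norm_sub_le_norm_sub_add_norm_sub _ _ _).trans (add_le_add hS hM)
    _ ≤ 18 * √x * (1 + Real.log q) := by nlinarith [Real.sqrt_nonneg x]
end

section
/- There is an absolute constant C such that for every integer q ≥ 1, every real α and every real y > 0, one has |#{a ∈ ℤ : gcd(a, q) = 1 and |α − a/q| ≤ 1/(6y)} − φ(q)/(3y)| ≤ C · 2^(ω(q)), where ω(q) denotes the number of distinct prime factors of q and φ is Euler's totient function. -/
/-!
Möbius inversion over the divisors `d ∣ q` turns the coprimality condition into divisibility
conditions: the number of integers coprime to `q` in a real interval `[u, v]` is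
`∑_{d ∣ q} μ(d) · #{a ∈ [u, v] : d ∣ a}`. Each count of multiples is `(v - u) / d` up to an error
at most `1`, and `∑_{d ∣ q} μ(d) / d = φ(q) / q`, so the count is `φ(q) (v - u) / q` up to
`∑_{d ∣ q} |μ(d)| = 2 ^ ω(q)`. The condition `|α - a / q| ≤ 1 / (6y)` puts `a` in an interval of
length `q / (3y)`.
-/

open Finset
open scoped ArithmeticFunction.Moebius

namespace ArithmeticFunction

theorem sum_divisors_moebius (n : ℕ) : ∑ d ∈ n.divisors, μ d = if n = 1 then 1 else 0 := by
  rw [← coe_mul_zeta_apply, moebius_mul_coe_zeta, one_apply]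

theorem totient_div_eq_sum_moebius_div {K : Type*} [Field K] [CharZero K] (n : ℕ) :
    (n.totient : K) / n = ∑ d ∈ n.divisors, (μ d : K) / d := by
  have hinv := (sum_eq_iff_sum_mul_moebius_eq (f := fun m => (m.totient : K))
    (g := fun m => (m : K))).mp fun m _ => by exact_mod_cast Nat.sum_totient m
  rcases n.eq_zero_or_pos with rfl | hn
  · simp
  rw [← hinv n hn, Nat.sum_divisorsAntidiagonal (fun d e => (μ d : K) * e), sum_div]
  refine sum_congr rfl fun d hd => ?_
  have hd0 : (d : K) ≠ 0 := by exact_mod_cast (Nat.pos_of_mem_divisors hd).ne'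
  have hn0 : (n : K) ≠ 0 := by exact_mod_cast hn.ne'
  rw [Nat.cast_div (Nat.dvd_of_mem_divisors hd) hd0, mul_div_assoc, div_div_cancel_left' hn0,
    div_eq_mul_inv]

theorem sum_divisors_abs_moebius {n : ℕ} (hn : n ≠ 0) :
    ∑ d ∈ n.divisors, |μ d| = 2 ^ #n.primeFactors := by
  simp_rw [abs_moebius]
  rw [← sum_filter, sum_const, nsmul_one, card_eq_sum_ones,
    Nat.sum_divisors_filter_squarefree hn, ← card_eq_sum_ones, card_powerset, Nat.factors_eq]
  norm_cast

theorem sum_divisors_filter_dvd_moebius {q : ℕ} (hq : q ≠ 0) (a : ℤ) :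
    ∑ d ∈ q.divisors with ((d : ℕ) : ℤ) ∣ a, μ d = if Int.gcd a q = 1 then 1 else 0 := by
  have hdiv : {d ∈ q.divisors | ((d : ℕ) : ℤ) ∣ a} = (Int.gcd a q).divisors := by
    ext d
    simp [Int.natCast_dvd, Int.gcd, Nat.dvd_gcd_iff, hq, and_comm]
  rw [hdiv, sum_divisors_moebius]

theorem card_filter_gcd_eq_one_eq_sum_moebius {q : ℕ} (hq : q ≠ 0) (s : Finset ℤ) :
    (#{a ∈ s | Int.gcd a q = 1} : ℤ) = ∑ d ∈ q.divisors, μ d * #{a ∈ s | (d : ℤ) ∣ a} := by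
  calc (#{a ∈ s | Int.gcd a q = 1} : ℤ)
      = ∑ a ∈ s, ∑ d ∈ q.divisors, if (d : ℤ) ∣ a then μ d else 0 := by
        simp_rw [← sum_filter, sum_divisors_filter_dvd_moebius hq, sum_boole]
    _ = ∑ d ∈ q.divisors, μ d * #{a ∈ s | (d : ℤ) ∣ a} := by
        rw [sum_comm]
        simp_rw [← sum_filter, sum_const, nsmul_eq_mul, mul_comm]

end ArithmeticFunction

theorem Int.abs_card_Icc_ceil_floor_sub_le {s t : ℝ} (hst : s ≤ t) :
    |(#(Icc ⌈s⌉ ⌊t⌋) : ℝ) - (t - s)| ≤ 1 := by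
  have hle : ⌈s⌉ ≤ ⌊t⌋ + 1 := ceil_le_floor_add_one s |>.trans (by gcongr)
  have hcard : (#(Icc ⌈s⌉ ⌊t⌋) : ℝ) = ⌊t⌋ + 1 - ⌈s⌉ := by
    exact_mod_cast card_Icc_of_le _ _ hle
  rw [hcard, abs_le]
  constructor <;> linarith [floor_le t, lt_floor_add_one t, le_ceil s, ceil_lt_add_one s]

theorem Int.filter_dvd_Icc_ceil_floor_eq_map {d : ℤ} (hd : 0 < d) (u v : ℝ) :
    {a ∈ Icc ⌈u⌉ ⌊v⌋ | d ∣ a} =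
      (Icc ⌈u / d⌉ ⌊v / d⌋).map ⟨(· * d), mul_left_injective₀ hd.ne'⟩ := by
  ext a
  simp only [mem_map, mem_filter, mem_Icc, ceil_le, le_floor, div_le_iff₀, le_div_iff₀,
    dvd_iff_exists_eq_mul_left, cast_pos.2 hd, ← cast_mul, Function.Embedding.coeFn_mk]
  aesop

theorem Int.abs_card_filter_dvd_Icc_ceil_floor_sub_le {d : ℤ} (hd : 0 < d) {u v : ℝ}
    (huv : u ≤ v) : |(#{a ∈ Icc ⌈u⌉ ⌊v⌋ | d ∣ a} : ℝ) - (v - u) / d| ≤ 1 := by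
  rw [filter_dvd_Icc_ceil_floor_eq_map hd, card_map, sub_div]
  exact abs_card_Icc_ceil_floor_sub_le (by gcongr)

open ArithmeticFunction in
theorem abs_card_filter_gcd_eq_one_Icc_sub_le {q : ℕ} (hq : q ≠ 0) {u v : ℝ} (huv : u ≤ v) :
    |(#{a ∈ Icc ⌈u⌉ ⌊v⌋ | Int.gcd a q = 1} : ℝ) - q.totient / q * (v - u)| ≤
      2 ^ #q.primeFactors := by
  have hcount : (#{a ∈ Icc ⌈u⌉ ⌊v⌋ | Int.gcd a q = 1} : ℝ) =
      ∑ d ∈ q.divisors, (μ d : ℝ) * #{a ∈ Icc ⌈u⌉ ⌊v⌋ | (d : ℤ) ∣ a} := by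
    exact_mod_cast card_filter_gcd_eq_one_eq_sum_moebius hq (Icc ⌈u⌉ ⌊v⌋)
  rw [hcount, totient_div_eq_sum_moebius_div, sum_mul, ← sum_sub_distrib]
  calc _ ≤ ∑ d ∈ q.divisors,
          |(μ d : ℝ)| * |(#{a ∈ Icc ⌈u⌉ ⌊v⌋ | (d : ℤ) ∣ a} : ℝ) - (v - u) / d| :=
        (abs_sum_le_sum_abs _ _).trans_eq <| sum_congr rfl fun d _ => by
          rw [← abs_mul]; congr 1; ring
    _ ≤ ∑ d ∈ q.divisors, |(μ d : ℝ)| := sum_le_sum fun d hd =>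
        mul_le_of_le_one_right (abs_nonneg _) <| by
          simpa using Int.abs_card_filter_dvd_Icc_ceil_floor_sub_le
            (d := d) (by exact_mod_cast Nat.pos_of_mem_divisors hd) huv
    _ = 2 ^ #q.primeFactors := by exact_mod_cast sum_divisors_abs_moebius hq

/-- **Lemma (counting coprime numerators near `α`).** There is an absolute `C > 0` such that
for every `q ≥ 1`, every real `α` and every `y > 0`,
`|#{a ∈ ℤ : gcd(a,q) = 1, |α - a/q| ≤ 1/(6y)} - φ(q)/(3y)| ≤ C · 2^(ω(q))`. -/
theorem count_coprime_numerators_in_interval :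
    ∃ C : ℝ, 0 < C ∧ ∀ q : ℕ, 1 ≤ q → ∀ α y : ℝ, 0 < y →
      |({a : ℤ | Int.gcd a q = 1 ∧ |α - (a : ℝ) / q| ≤ 1 / (6 * y)}.ncard : ℝ) -
          (q.totient : ℝ) / (3 * y)| ≤
        C * 2 ^ q.primeFactors.card := by
  refine ⟨1, one_pos, fun q hq α y hy => ?_⟩
  have hq0 : (0 : ℝ) < q := by exact_mod_cast hq
  set r : ℝ := 1 / (6 * y) * q with hr_def
  have hr : 0 ≤ r := by positivity
  have hmem (a : ℤ) : |α - a / q| ≤ 1 / (6 * y) ↔ q * α - r ≤ a ∧ a ≤ q * α + r := by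
    rw [show α - a / q = (q * α - a) / q by field_simp, abs_div, abs_of_pos hq0,
      div_le_iff₀ hq0, abs_le]
    constructor <;> rintro ⟨h₁, h₂⟩ <;> constructor <;> linarith
  have hset : {a : ℤ | Int.gcd a q = 1 ∧ |α - (a : ℝ) / q| ≤ 1 / (6 * y)} =
      ↑{a ∈ Icc ⌈q * α - r⌉ ⌊q * α + r⌋ | Int.gcd a q = 1} := by
    ext a
    simp only [Set.mem_ofPred_eq, coe_filter, mem_Icc, hmem, Int.ceil_le, Int.le_floor]
    exact and_comm
  have hmain : (q.totient : ℝ) / q * ((q * α + r) - (q * α - r)) = q.totient / (3 * y) := by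
    rw [hr_def]
    field_simp
    ring
  rw [hset, Set.ncard_coe_finset, one_mul, ← hmain]
  exact abs_card_filter_gcd_eq_one_Icc_sub_le (by omega) (by linarith)
end
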